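/- arXiv:1304.0094 — 4 statements merged into one kernel-verified Lean document; each statement's English description precedes it below -/
import Mathlib

section
/- Let ℓ₁ and ℓ₂ be lines of projective spaces over a commutative field F and let μ: ℓ₁ × ℓ₂ → ℙ' be a global linear map of their product into a projective space ℙ'. Assume A and X₁ are distinct points of ℓ₁ such that r := ({A} × ℓ₂)μ and s := ({X₁} × ℓ₂)μ are distinct lines of ℙ' whose intersection is a single point Z, and for X ∈ ℓ₁ write g_X := ({X} × ℓ₂)μ (each g_X is then a line). Then for every X ∈ ℓ₁ the line g_X contains exactly one point W_X belonging to no line g_{X'} with X' ∈ ℓ₁ ∖ {X}, and every point of g_X ∖ {W_X} lies on exactly one line g_{X'} with X' ∈ ℓ₁ ∖ {X}. -/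
open Set

namespace Segre

variable {P Q : Type*}

/-- Two points are collinear w.r.t. a line set `L` if some line contains both. -/
def Collin (L : Set (Set P)) (x y : P) : Prop := ∃ g ∈ L, x ∈ g ∧ y ∈ g

/-- The union of all lines of `L` through both `x` and `y`; for distinct collinear
points of a semilinear space this is the unique line `xy`. -/
def lineThru (L : Set (Set P)) (x y : P) : Set P := ⋃ g ∈ {g ∈ L | x ∈ g ∧ y ∈ g}, g

/-- The join `M₁ ∨ M₂` of two point sets in a (semi)linear space with line set `L`. -/
def sJoin (L : Set (Set P)) (M₁ M₂ : Set P) : Set P :=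
  M₁ ∪ M₂ ∪
    ⋃ (x ∈ M₁) (y ∈ M₂) (_ : x ≠ y ∧ Collin L x y), lineThru L x y

/-- The (possibly empty) image point set `Xχ` of a single point under a partial map. -/
def ptImg (χ : P → Option Q) (X : P) : Set Q := {y | χ X = some y}

/-- The image `Mχ` of a point set under a partial map. -/
def mapSet (χ : P → Option Q) (M : Set P) : Set Q := ⋃ X ∈ M, ptImg χ X

/-- Axioms (L1) and (L2) for a linear map from the semilinear space with point set `P`
and line set `L` into the projective space with point set `Q` and line set `L'`.
Points in the exceptional set are modelled by the value `none`. -/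
def IsLinMap (L : Set (Set P)) (L' : Set (Set Q)) (χ : P → Option Q) : Prop :=
  (∀ X Y : P, Collin L X Y →
      mapSet χ (sJoin L {X} {Y}) = sJoin L' (ptImg χ X) (ptImg χ Y)) ∧
  (∀ X Y : P, Collin L X Y → X ≠ Y → ptImg χ X = ptImg χ Y →
      ∃ Z ∈ lineThru L X Y, χ Z = none)

/-- A linear map is global if its domain is everything. -/
def IsGlobal (χ : P → Option Q) : Prop := ∀ X, χ X ≠ none

/-- The lines of the product of two semilinear spaces with line sets `L₁`, `L₂`. -/
def prodLines (L₁ : Set (Set P)) (L₂ : Set (Set Q)) : Set (Set (P × Q)) :=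
  {s | (∃ X₁ : P, ∃ g₂ ∈ L₂, s = {X₁} ×ˢ g₂) ∨ ∃ g₁ ∈ L₁, ∃ X₂ : Q, s = g₁ ×ˢ {X₂}}

/-- The lines of the product of two lines `ℓ₁`, `ℓ₂` (viewed as semilinear spaces). -/
def lineProdLines (ℓ₁ : Set P) (ℓ₂ : Set Q) : Set (Set (P × Q)) :=
  {s | (∃ X ∈ ℓ₁, s = {X} ×ˢ ℓ₂) ∨ ∃ Y ∈ ℓ₂, s = ℓ₁ ×ˢ {Y}}

/-- A collineation of a projective (or semilinear) space with line set `L`: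
a bijection such that it and its inverse map lines onto lines. -/
def IsCollineation (L : Set (Set P)) (α : P → P) : Prop :=
  Function.Bijective α ∧ ∀ g : Set P, g ∈ L ↔ α '' g ∈ L

section Projective

variable {K V : Type*} [Field K] [AddCommGroup V] [Module K V]

/-- The point set of the projective line through two (distinct) points of a
projective space `ℙ K V`. -/
def projLineThrough (x y : Projectivization K V) : Set (Projectivization K V) :=
  {z | z.submodule ≤ x.submodule ⊔ y.submodule}

/-- The lines of the projective space `ℙ K V`. -/
def projLines (K V : Type*) [Field K] [AddCommGroup V] [Module K V] :
    Set (Set (Projectivization K V)) :=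
  {g | ∃ x y : Projectivization K V, x ≠ y ∧ g = projLineThrough x y}

/-- The linear span of (representatives of) a set of projective points; its projective
space is the projective closure of the set, whose projective dimension is the vector
rank of this span minus one. -/
def spanOf (M : Set (Projectivization K V)) : Submodule K V := ⨆ x ∈ M, x.submodule

/-- `E` is the point set of a plane (projective dimension 2). -/
def IsPlane (E : Set (Projectivization K V)) : Prop :=
  ∃ W : Submodule K V, Module.finrank K ↥W = 3 ∧ E = {x | x.submodule ≤ W}

/-- The family of points `A` is a projective basis of the subspace of `ℙ K V`
corresponding to the submodule `W`: the representatives are linearly independent and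
span `W`. -/
def IsProjBasisOf {ι : Type*} (A : ι → Projectivization K V) (W : Submodule K V) : Prop :=
  iSupIndep (fun i => (A i).submodule) ∧ (⨆ i, (A i).submodule) = W

end Projective

section PG

variable (F : Type*) [Field F]

/-- The point set of `PG(k, F)`. -/
abbrev PGPt (k : ℕ) := Projectivization F (Fin (k + 1) → F)

/-- The line set of `PG(k, F)`. -/
abbrev PGLines (k : ℕ) := projLines F (Fin (k + 1) → F)

variable (n m : ℕ)

/-- A regular embedding `γ : ℙ₁ × ℙ₂ → ℙ̄`, where `ℙ₁ = PG(n,F)`, `ℙ₂ = PG(m,F)` and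
`ℙ̄ = PG(nm+n+m, F)`: a global injective linear map of the product such that the
projective closure of the image has (projective) dimension `nm+n+m`. -/
def IsRegularEmbedding (γ : PGPt F n × PGPt F m → PGPt F (n * m + n + m)) : Prop :=
  IsLinMap (prodLines (PGLines F n) (PGLines F m)) (PGLines F (n * m + n + m))
      (fun p => some (γ p)) ∧
  Function.Injective γ ∧
  Module.finrank F ↥(spanOf (Set.range γ)) = n * m + n + m + 1

variable {K W : Type*} [Field K] [AddCommGroup W] [Module K W]

/-- Condition (i) on `χ`, w.r.t. the basis `B` of `ℙ₂` and the plane `E ⊆ 𝒫₁`: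
for every `i = 1, …, m` the restriction of `χ` to `E × {B 0, B i}` is global and
of rank greater than `2` (i.e. the vector rank of the span of its image exceeds `3`). -/
def CondI (χ : PGPt F n × PGPt F m → Option (Projectivization K W))
    (B : Fin (m + 1) → PGPt F m) (E : Set (PGPt F n)) : Prop :=
  IsProjBasisOf B (⊤ : Submodule F (Fin (m + 1) → F)) ∧ IsPlane E ∧
  ∀ i : Fin (m + 1), i ≠ 0 →
    (∀ p ∈ E ×ˢ ({B 0, B i} : Set (PGPt F m)), χ p ≠ none) ∧
    3 < Module.rank K ↥(spanOf (mapSet χ (E ×ˢ ({B 0, B i} : Set (PGPt F m)))))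

/-- Condition (ii) on `χ`, w.r.t. the point `A ∈ 𝒫₁`: the image `({A} × 𝒫₂)χ` has
projective dimension `m` (i.e. the vector rank of the span of the image is `m + 1`). -/
def CondII (χ : PGPt F n × PGPt F m → Option (Projectivization K W))
    (A : PGPt F n) : Prop :=
  Module.rank K ↥(spanOf (mapSet χ (({A} : Set (PGPt F n)) ×ˢ (univ : Set (PGPt F m)))))
    = (m : Cardinal) + 1

/-- `ℓ₂` is a special line for the data `χ, γ, φ, α'`: it is a line of `ℙ₂` such that
(a) `({X} × ℓ₂)γφ = ({X} × ℓ₂)αχ` for every `X ∈ 𝒫₁`, and (b) the rank of `αχ`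
restricted to `𝒫₁ × ℓ₂` is greater than `1` (vector rank of the span `> 2`). -/
def SpecialLine (χ : PGPt F n × PGPt F m → Option (Projectivization K W))
    (γ : PGPt F n × PGPt F m → PGPt F (n * m + n + m))
    (φ : PGPt F (n * m + n + m) → Option (Projectivization K W))
    (α' : PGPt F m → PGPt F m) (ℓ₂ : Set (PGPt F m)) : Prop :=
  ℓ₂ ∈ PGLines F m ∧
  (∀ X : PGPt F n,
    mapSet (fun p => φ (γ p)) (({X} : Set (PGPt F n)) ×ˢ ℓ₂) =
      mapSet (fun p : PGPt F n × PGPt F m => χ (p.1, α' p.2))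
        (({X} : Set (PGPt F n)) ×ˢ ℓ₂)) ∧
  2 < Module.rank K ↥(spanOf (mapSet (fun p : PGPt F n × PGPt F m => χ (p.1, α' p.2))
        ((univ : Set (PGPt F n)) ×ˢ ℓ₂)))

end PG

end Segre

namespace Segre
namespace Aux15
open Module Set

section Geom
variable {K V : Type*} [Field K] [AddCommGroup V] [Module K V]

lemma mem_plt {x y z : Projectivization K V} :
    z ∈ projLineThrough x y ↔ z.submodule ≤ x.submodule ⊔ y.submodule := Iff.rfl

lemma self_mem_plt_left (x y : Projectivization K V) : x ∈ projLineThrough x y :=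
  mem_plt.mpr le_sup_left

lemma self_mem_plt_right (x y : Projectivization K V) : y ∈ projLineThrough x y :=
  mem_plt.mpr le_sup_right

lemma finrank_sup_two {a b : Projectivization K V} (hab : a ≠ b) :
    finrank K ↥(a.submodule ⊔ b.submodule) = 2 := by
  have hne : a.submodule ≠ b.submodule := fun h => hab (Projectivization.submodule_injective h)
  have h1 : finrank K ↥a.submodule = 1 := a.finrank_submodule
  have h2 : finrank K ↥b.submodule = 1 := b.finrank_submodule
  have key := Submodule.finrank_sup_add_finrank_inf_eq a.submodule b.submodule
  have hinf : finrank K ↥(a.submodule ⊓ b.submodule) = 0 := by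
    by_contra h
    have hle : finrank K ↥(a.submodule ⊓ b.submodule) ≤ 1 := by
      simpa [h1] using Submodule.finrank_mono (inf_le_left (a := a.submodule) (b := b.submodule))
    have heq : a.submodule ⊓ b.submodule = a.submodule :=
      Submodule.eq_of_le_of_finrank_le inf_le_left (by omega)
    have : a.submodule ≤ b.submodule := heq ▸ inf_le_right
    exact hne (Submodule.eq_of_le_of_finrank_le this (by omega))
  omega

lemma plt_submodule_eq {a b U V' : Projectivization K V} (hab : a ≠ b) (hUV : U ≠ V')
    (hU : U ∈ projLineThrough a b) (hV : V' ∈ projLineThrough a b) :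
    U.submodule ⊔ V'.submodule = a.submodule ⊔ b.submodule :=
  Submodule.eq_of_le_of_finrank_le (sup_le hU hV)
    (by rw [finrank_sup_two hab, finrank_sup_two hUV])

lemma plt_eq_of_mem {a b U V' : Projectivization K V} (hab : a ≠ b) (hUV : U ≠ V')
    (hU : U ∈ projLineThrough a b) (hV : V' ∈ projLineThrough a b) :
    projLineThrough a b = projLineThrough U V' := by
  unfold projLineThrough
  rw [plt_submodule_eq hab hUV hU hV]

lemma two_lines_eq {a b c d U V' : Projectivization K V} (hab : a ≠ b) (hcd : c ≠ d)
    (hUV : U ≠ V') (h1 : U ∈ projLineThrough a b) (h2 : V' ∈ projLineThrough a b)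
    (h3 : U ∈ projLineThrough c d) (h4 : V' ∈ projLineThrough c d) :
    projLineThrough a b = projLineThrough c d :=
  (plt_eq_of_mem hab hUV h1 h2).trans (plt_eq_of_mem hcd hUV h3 h4).symm

lemma lines_meet {a b c d : Projectivization K V} (hab : a ≠ b) (hcd : c ≠ d)
    {W₀ : Submodule K V} [FiniteDimensional K ↥W₀] (h3 : finrank K ↥W₀ = 3)
    (hL : a.submodule ⊔ b.submodule ≤ W₀) (hM : c.submodule ⊔ d.submodule ≤ W₀) :
    ∃ z, z ∈ projLineThrough a b ∧ z ∈ projLineThrough c d := by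
  set L := a.submodule ⊔ b.submodule
  set M := c.submodule ⊔ d.submodule
  have hsup : finrank K ↥(L ⊔ M) ≤ 3 := h3 ▸ Submodule.finrank_mono (sup_le hL hM)
  have key := Submodule.finrank_sup_add_finrank_inf_eq L M
  rw [finrank_sup_two hab, finrank_sup_two hcd] at key
  have hpos : finrank K ↥(L ⊓ M) ≠ 0 := by omega
  have hne : L ⊓ M ≠ ⊥ := by
    intro h
    rw [h, finrank_bot] at hpos
    exact hpos rfl
  obtain ⟨v, hv, hv0⟩ := Submodule.ne_bot_iff _ |>.mp hne
  refine ⟨Projectivization.mk K v hv0, ?_, ?_⟩ <;>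
    rw [mem_plt, Projectivization.submodule_mk, Submodule.span_singleton_le_iff_mem]
  · exact hv.1
  · exact hv.2

lemma collin_proj {a b : Projectivization K V} (hab : a ≠ b) : Collin (projLines K V) a b :=
  ⟨projLineThrough a b, ⟨a, b, hab, rfl⟩, self_mem_plt_left a b, self_mem_plt_right a b⟩

end Geom

section SemiLin
variable {P Q : Type*}

lemma sJoin_pair (L : Set (Set P)) {p q : P} (hpq : p ≠ q) (hc : Collin L p q) :
    sJoin L {p} {q} = {p} ∪ {q} ∪ lineThru L p q := by
  ext z
  simp [sJoin, hpq, hc]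

lemma mem_mapSet {χ : P → Option Q} {M : Set P} {u : Q} :
    u ∈ mapSet χ M ↔ ∃ p ∈ M, χ p = some u := by
  simp [mapSet, ptImg]

lemma lineThru_of_unique {L : Set (Set P)} {p q : P} {g₀ : Set P}
    (h : {g ∈ L | p ∈ g ∧ q ∈ g} = {g₀}) : lineThru L p q = g₀ := by
  rw [lineThru, h, biUnion_singleton]

lemma lineThru_vert {ℓ₁ : Set P} {ℓ₂ : Set Q} {X : P} {Y Y' : Q} (hX : X ∈ ℓ₁)
    (hY : Y ∈ ℓ₂) (hY' : Y' ∈ ℓ₂) (hYY' : Y ≠ Y') :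
    lineThru (lineProdLines ℓ₁ ℓ₂) (X, Y) (X, Y') = {X} ×ˢ ℓ₂ := by
  apply lineThru_of_unique
  ext g
  simp only [mem_setOf_eq, mem_singleton_iff]
  constructor
  · rintro ⟨(⟨X'', _, rfl⟩ | ⟨Y'', _, rfl⟩), h1, h2⟩
    · have h1a : X = X'' := h1.1
      rw [← h1a]
    · have e1 : Y = Y'' := h1.2
      have e2 : Y' = Y'' := h2.2
      exact absurd (e1.trans e2.symm) hYY'
  · rintro rfl
    exact ⟨Or.inl ⟨X, hX, rfl⟩, ⟨rfl, hY⟩, ⟨rfl, hY'⟩⟩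

lemma lineThru_horiz {ℓ₁ : Set P} {ℓ₂ : Set Q} {Y : Q} {X X' : P} (hY : Y ∈ ℓ₂)
    (hX : X ∈ ℓ₁) (hX' : X' ∈ ℓ₁) (hXX' : X ≠ X') :
    lineThru (lineProdLines ℓ₁ ℓ₂) (X, Y) (X', Y) = ℓ₁ ×ˢ {Y} := by
  apply lineThru_of_unique
  ext g
  simp only [mem_setOf_eq, mem_singleton_iff]
  constructor
  · rintro ⟨(⟨X'', _, rfl⟩ | ⟨Y'', _, rfl⟩), h1, h2⟩
    · have e1 : X = X'' := h1.1
      have e2 : X' = X'' := h2.1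
      exact absurd (e1.trans e2.symm) hXX'
    · have e1 : Y = Y'' := h1.2
      rw [← e1]
  · rintro rfl
    exact ⟨Or.inr ⟨Y, hY, rfl⟩, ⟨hX, rfl⟩, ⟨hX', rfl⟩⟩

end SemiLin

section ProjLine
variable {K V : Type*} [Field K] [AddCommGroup V] [Module K V]

lemma lineThru_proj {a b : Projectivization K V} (hab : a ≠ b) :
    lineThru (projLines K V) a b = projLineThrough a b := by
  apply lineThru_of_unique
  ext g
  simp only [mem_setOf_eq, mem_singleton_iff]
  constructor
  · rintro ⟨⟨x, y, hxy, rfl⟩, h1, h2⟩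
    exact plt_eq_of_mem hxy hab h1 h2
  · rintro rfl
    exact ⟨⟨a, b, hab, rfl⟩, self_mem_plt_left a b, self_mem_plt_right a b⟩

lemma sJoin_proj {a b : Projectivization K V} (hab : a ≠ b) :
    sJoin (projLines K V) {a} {b} = projLineThrough a b := by
  rw [sJoin_pair _ hab (collin_proj hab), lineThru_proj hab]
  apply union_eq_self_of_subset_left
  rintro z (h | h)
  · obtain rfl : z = a := h
    exact self_mem_plt_left _ _
  · obtain rfl : z = b := h
    exact self_mem_plt_right _ _

end ProjLine
end Aux15
end Segre

section StatementFifteen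
open Segre.Aux15 Module

open Segre Set in
/-- Proposition `tesirido`, case 4.2, second part: each line `g_X` of
the family contains exactly one distinguished point `W_X` lying on no other line of the
family, and every other point of `g_X` lies on exactly one line `g_{X'}`, `X' ≠ X`. -/
theorem statement_15 (F : Type*) [Field F]
    (V₁ V₂ : Type*) [AddCommGroup V₁] [Module F V₁] [AddCommGroup V₂] [Module F V₂]
    (K W : Type*) [Field K] [AddCommGroup W] [Module K W]
    (ℓ₁ : Set (Projectivization F V₁)) (hℓ₁ : ℓ₁ ∈ projLines F V₁)
    (ℓ₂ : Set (Projectivization F V₂)) (hℓ₂ : ℓ₂ ∈ projLines F V₂)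
    (μ : Projectivization F V₁ × Projectivization F V₂ → Option (Projectivization K W))
    (hμ : IsLinMap (lineProdLines ℓ₁ ℓ₂) (projLines K W) μ)
    (hglob : ∀ q ∈ ℓ₁ ×ˢ ℓ₂, μ q ≠ none)
    (A X₁ : Projectivization F V₁) (hA : A ∈ ℓ₁) (hX₁ : X₁ ∈ ℓ₁) (hAX : A ≠ X₁)
    (gl : Projectivization F V₁ → Set (Projectivization K W))
    (hgl : ∀ X : Projectivization F V₁,
      gl X = mapSet μ (({X} : Set (Projectivization F V₁)) ×ˢ ℓ₂))
    (hr : gl A ∈ projLines K W) (hs : gl X₁ ∈ projLines K W) (hrs : gl A ≠ gl X₁)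
    (Z : Projectivization K W) (hZ : gl A ∩ gl X₁ = {Z}) :
    ∀ X ∈ ℓ₁, ∃ Wx : Projectivization K W,
      (Wx ∈ gl X ∧ ∀ X' ∈ ℓ₁, X' ≠ X → Wx ∉ gl X') ∧
      (∀ U ∈ gl X, (∀ X' ∈ ℓ₁, X' ≠ X → U ∉ gl X') → U = Wx) ∧
      ∀ U ∈ gl X, U ≠ Wx →
        ∃! h : Set (Projectivization K W),
          (∃ X' ∈ ℓ₁, X' ≠ X ∧ h = gl X') ∧ U ∈ h := by
  classical
  obtain ⟨pA, qA, hpqA, hglA⟩ := hr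
  obtain ⟨pS, qS, hpqS, hglS⟩ := hs
  obtain ⟨u₂, v₂, huv₂, hl2eq⟩ := hℓ₂
  have hu₂ : u₂ ∈ ℓ₂ := by rw [hl2eq]; exact self_mem_plt_left u₂ v₂
  have hv₂ : v₂ ∈ ℓ₂ := by rw [hl2eq]; exact self_mem_plt_right u₂ v₂
  -- the pointwise map
  set mv : Projectivization F V₁ → Projectivization F V₂ → Projectivization K W :=
    fun X Y => (μ (X, Y)).getD pA with hmvdef
  have hm : ∀ X ∈ ℓ₁, ∀ Y ∈ ℓ₂, μ (X, Y) = some (mv X Y) := by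
    intro X hX Y hY
    obtain ⟨c, hc⟩ := Option.ne_none_iff_exists'.mp (hglob (X, Y) ⟨hX, hY⟩)
    rw [hc]
    simp [hmvdef, hc]
  have hpt : ∀ X ∈ ℓ₁, ∀ Y ∈ ℓ₂, ptImg μ (X, Y) = {mv X Y} := by
    intro X hX Y hY
    ext u
    simp [ptImg, hm X hX Y hY, eq_comm]
  -- collinearity in the product space
  have hcol_v : ∀ X ∈ ℓ₁, ∀ Y ∈ ℓ₂, ∀ Y' ∈ ℓ₂,
      Collin (lineProdLines ℓ₁ ℓ₂) (X, Y) (X, Y') :=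
    fun X hX Y hY Y' hY' => ⟨{X} ×ˢ ℓ₂, Or.inl ⟨X, hX, rfl⟩, ⟨rfl, hY⟩, ⟨rfl, hY'⟩⟩
  have hcol_h : ∀ Y ∈ ℓ₂, ∀ X ∈ ℓ₁, ∀ X' ∈ ℓ₁,
      Collin (lineProdLines ℓ₁ ℓ₂) (X, Y) (X', Y) :=
    fun Y hY X hX X' hX' => ⟨ℓ₁ ×ˢ {Y}, Or.inr ⟨Y, hY, rfl⟩, ⟨hX, rfl⟩, ⟨hX', rfl⟩⟩
  -- injectivity on columns and rows
  have col_inj : ∀ X ∈ ℓ₁, ∀ Y ∈ ℓ₂, ∀ Y' ∈ ℓ₂, Y ≠ Y' → mv X Y ≠ mv X Y' := by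
    intro X hX Y hY Y' hY' hne heq
    obtain ⟨z, hz, hznone⟩ := hμ.2 (X, Y) (X, Y') (hcol_v X hX Y hY Y' hY')
      (by simp [Prod.ext_iff, hne])
      (by rw [hpt X hX Y hY, hpt X hX Y' hY', heq])
    rw [lineThru_vert hX hY hY' hne] at hz
    exact hglob z ⟨by rw [show z.1 = X from hz.1]; exact hX, hz.2⟩ hznone
  have row_inj : ∀ Y ∈ ℓ₂, ∀ X ∈ ℓ₁, ∀ X' ∈ ℓ₁, X ≠ X' → mv X Y ≠ mv X' Y := by
    intro Y hY X hX X' hX' hne heq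
    obtain ⟨z, hz, hznone⟩ := hμ.2 (X, Y) (X', Y) (hcol_h Y hY X hX X' hX')
      (by simp [Prod.ext_iff, hne])
      (by rw [hpt X hX Y hY, hpt X' hX' Y hY, heq])
    rw [lineThru_horiz hY hX hX' hne] at hz
    exact hglob z ⟨hz.1, by rw [show z.2 = Y from hz.2]; exact hY⟩ hznone
  -- the image lines
  have key_vert : ∀ X ∈ ℓ₁, gl X = projLineThrough (mv X u₂) (mv X v₂) := by
    intro X hX
    have h1 := hμ.1 (X, u₂) (X, v₂) (hcol_v X hX u₂ hu₂ v₂ hv₂)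
    have hsj : sJoin (lineProdLines ℓ₁ ℓ₂) {(X, u₂)} {(X, v₂)} = {X} ×ˢ ℓ₂ := by
      rw [sJoin_pair _ (by simp [Prod.ext_iff, huv₂]) (hcol_v X hX u₂ hu₂ v₂ hv₂),
        lineThru_vert hX hu₂ hv₂ huv₂]
      apply union_eq_self_of_subset_left
      rintro z (h | h)
      · obtain rfl : z = (X, u₂) := h
        exact ⟨rfl, hu₂⟩
      · obtain rfl : z = (X, v₂) := h
        exact ⟨rfl, hv₂⟩
    rw [hsj, hpt X hX u₂ hu₂, hpt X hX v₂ hv₂] at h1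
    rw [hgl X, h1, sJoin_proj (col_inj X hX u₂ hu₂ v₂ hv₂ huv₂)]
  set hl : Projectivization F V₂ → Set (Projectivization K W) :=
    fun Y => mapSet μ (ℓ₁ ×ˢ ({Y} : Set (Projectivization F V₂))) with hhldef
  have key_horiz : ∀ Y ∈ ℓ₂, hl Y = projLineThrough (mv A Y) (mv X₁ Y) := by
    intro Y hY
    have h1 := hμ.1 (A, Y) (X₁, Y) (hcol_h Y hY A hA X₁ hX₁)
    have hsj : sJoin (lineProdLines ℓ₁ ℓ₂) {(A, Y)} {(X₁, Y)} = ℓ₁ ×ˢ {Y} := by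
      rw [sJoin_pair _ (by simp [Prod.ext_iff, hAX]) (hcol_h Y hY A hA X₁ hX₁),
        lineThru_horiz hY hA hX₁ hAX]
      apply union_eq_self_of_subset_left
      rintro z (h | h)
      · obtain rfl : z = (A, Y) := h
        exact ⟨hA, rfl⟩
      · obtain rfl : z = (X₁, Y) := h
        exact ⟨hX₁, rfl⟩
    rw [hsj, hpt A hA Y hY, hpt X₁ hX₁ Y hY] at h1
    show mapSet μ (ℓ₁ ×ˢ ({Y} : Set (Projectivization F V₂))) =
      projLineThrough (mv A Y) (mv X₁ Y)
    rw [h1, sJoin_proj (row_inj Y hY A hA X₁ hX₁ hAX)]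
  -- membership descriptions
  have mem_gl : ∀ X ∈ ℓ₁, ∀ u, (u ∈ gl X ↔ ∃ Y ∈ ℓ₂, mv X Y = u) := by
    intro X hX u
    rw [hgl X, mem_mapSet]
    constructor
    · rintro ⟨⟨z1, z2⟩, ⟨hz1, hz2⟩, hz⟩
      obtain rfl : z1 = X := hz1
      refine ⟨z2, hz2, ?_⟩
      rw [hm z1 hX z2 hz2] at hz
      exact Option.some_inj.mp hz
    · rintro ⟨Y, hY, rfl⟩
      exact ⟨(X, Y), ⟨rfl, hY⟩, hm X hX Y hY⟩
  have mem_hl : ∀ Y ∈ ℓ₂, ∀ u, (u ∈ hl Y ↔ ∃ X ∈ ℓ₁, mv X Y = u) := by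
    intro Y hY u
    rw [hhldef, mem_mapSet]
    constructor
    · rintro ⟨⟨z1, z2⟩, ⟨hz1, hz2⟩, hz⟩
      obtain rfl : z2 = Y := hz2
      refine ⟨z1, hz1, ?_⟩
      rw [hm z1 hz1 z2 hY] at hz
      exact Option.some_inj.mp hz
    · rintro ⟨X, hX, rfl⟩
      exact ⟨(X, Y), ⟨hX, rfl⟩, hm X hX Y hY⟩
  have mv_mem_gl : ∀ X ∈ ℓ₁, ∀ Y ∈ ℓ₂, mv X Y ∈ gl X :=
    fun X hX Y hY => (mem_gl X hX _).mpr ⟨Y, hY, rfl⟩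
  have mv_mem_hl : ∀ X ∈ ℓ₁, ∀ Y ∈ ℓ₂, mv X Y ∈ hl Y :=
    fun X hX Y hY => (mem_hl Y hY _).mpr ⟨X, hX, rfl⟩
  -- planarity
  set LA := pA.submodule ⊔ qA.submodule with hLAdef
  set LS := pS.submodule ⊔ qS.submodule with hLSdef
  have hZmem : Z ∈ gl A ∩ gl X₁ := by rw [hZ]; exact rfl
  have hZ1 : Z.submodule ≤ LA := by have h := hZmem.1; rw [hglA] at h; exact h
  have hZ2 : Z.submodule ≤ LS := by have h := hZmem.2; rw [hglS] at h; exact h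
  have hLAS : LA ≠ LS := by
    intro h
    apply hrs
    rw [hglA, hglS]
    unfold projLineThrough
    rw [← hLAdef, ← hLSdef, h]
  have hfLA : finrank K ↥LA = 2 := finrank_sup_two hpqA
  have hfLS : finrank K ↥LS = 2 := finrank_sup_two hpqS
  have hinf1 : finrank K ↥(LA ⊓ LS) = 1 := by
    have hge : 1 ≤ finrank K ↥(LA ⊓ LS) := by
      have := Submodule.finrank_mono (le_inf hZ1 hZ2)
      rwa [Z.finrank_submodule] at this
    have hle : finrank K ↥(LA ⊓ LS) ≤ 2 := hfLA ▸ Submodule.finrank_mono inf_le_left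
    rcases Nat.lt_or_ge (finrank K ↥(LA ⊓ LS)) 2 with h | h
    · omega
    · exfalso
      have heq : LA ⊓ LS = LA := Submodule.eq_of_le_of_finrank_le inf_le_left (by omega)
      have hle2 : LA ≤ LS := heq ▸ inf_le_right
      exact hLAS (Submodule.eq_of_le_of_finrank_le hle2 (by omega))
  set W₀ := LA ⊔ LS with hW₀def
  have hfW₀ : finrank K ↥W₀ = 3 := by
    have key := Submodule.finrank_sup_add_finrank_inf_eq LA LS
    rw [hfLA, hfLS, hinf1] at key
    rw [hW₀def]
    omega
  have memA : ∀ z, z ∈ gl A → Projectivization.submodule z ≤ W₀ := by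
    intro z hz
    rw [hglA] at hz
    exact le_trans hz le_sup_left
  have memS : ∀ z, z ∈ gl X₁ → Projectivization.submodule z ≤ W₀ := by
    intro z hz
    rw [hglS] at hz
    exact le_trans hz le_sup_right
  have hl_sub : ∀ Y ∈ ℓ₂,
      (mv A Y).submodule ⊔ (mv X₁ Y).submodule ≤ W₀ :=
    fun Y hY => sup_le (memA _ (mv_mem_gl A hA Y hY)) (memS _ (mv_mem_gl X₁ hX₁ Y hY))
  have gl_pt_sub : ∀ X ∈ ℓ₁, ∀ Y ∈ ℓ₂, (mv X Y).submodule ≤ W₀ := by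
    intro X hX Y hY
    have h := mv_mem_hl X hX Y hY
    rw [key_horiz Y hY] at h
    exact le_trans h (hl_sub Y hY)
  have gl_sub : ∀ X ∈ ℓ₁, (mv X u₂).submodule ⊔ (mv X v₂).submodule ≤ W₀ :=
    fun X hX => sup_le (gl_pt_sub X hX u₂ hu₂) (gl_pt_sub X hX v₂ hv₂)
  have hgen_v : ∀ X ∈ ℓ₁, mv X u₂ ≠ mv X v₂ :=
    fun X hX => col_inj X hX u₂ hu₂ v₂ hv₂ huv₂
  have hgen_h : ∀ Y ∈ ℓ₂, mv A Y ≠ mv X₁ Y :=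
    fun Y hY => row_inj Y hY A hA X₁ hX₁ hAX
  -- injectivity of the line families
  have g_inj : ∀ X ∈ ℓ₁, ∀ X' ∈ ℓ₁, gl X = gl X' → X = X' := by
    intro X hX X' hX' heq
    by_contra hne
    have hall : ∀ Y ∈ ℓ₂, hl Y = gl X := by
      intro Y hY
      rw [key_horiz Y hY, key_vert X hX]
      refine two_lines_eq (hgen_h Y hY) (hgen_v X hX) (row_inj Y hY X hX X' hX' hne) ?_ ?_ ?_ ?_
      · have h := mv_mem_hl X hX Y hY; rwa [key_horiz Y hY] at h
      · have h := mv_mem_hl X' hX' Y hY; rwa [key_horiz Y hY] at h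
      · have h := mv_mem_gl X hX Y hY; rwa [key_vert X hX] at h
      · have h := mv_mem_gl X' hX' Y hY; rw [← heq] at h; rwa [key_vert X hX] at h
    apply hrs
    have hA' : gl A = gl X := by
      rw [key_vert A hA, key_vert X hX]
      refine two_lines_eq (hgen_v A hA) (hgen_v X hX)
        (col_inj A hA u₂ hu₂ v₂ hv₂ huv₂) (self_mem_plt_left _ _) (self_mem_plt_right _ _) ?_ ?_
      · have h := mv_mem_hl A hA u₂ hu₂; rw [hall u₂ hu₂] at h; rwa [key_vert X hX] at h
      · have h := mv_mem_hl A hA v₂ hv₂; rw [hall v₂ hv₂] at h; rwa [key_vert X hX] at h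
    have hS' : gl X₁ = gl X := by
      rw [key_vert X₁ hX₁, key_vert X hX]
      refine two_lines_eq (hgen_v X₁ hX₁) (hgen_v X hX)
        (col_inj X₁ hX₁ u₂ hu₂ v₂ hv₂ huv₂) (self_mem_plt_left _ _) (self_mem_plt_right _ _) ?_ ?_
      · have h := mv_mem_hl X₁ hX₁ u₂ hu₂; rw [hall u₂ hu₂] at h; rwa [key_vert X hX] at h
      · have h := mv_mem_hl X₁ hX₁ v₂ hv₂; rw [hall v₂ hv₂] at h; rwa [key_vert X hX] at h
    exact hA'.trans hS'.symm
  have h_inj : ∀ Y ∈ ℓ₂, ∀ Y' ∈ ℓ₂, hl Y = hl Y' → Y = Y' := by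
    intro Y hY Y' hY' heq
    by_contra hne
    have hall : ∀ X ∈ ℓ₁, gl X = hl Y := by
      intro X hX
      rw [key_vert X hX, key_horiz Y hY]
      refine two_lines_eq (hgen_v X hX) (hgen_h Y hY) (col_inj X hX Y hY Y' hY' hne) ?_ ?_ ?_ ?_
      · have h := mv_mem_gl X hX Y hY; rwa [key_vert X hX] at h
      · have h := mv_mem_gl X hX Y' hY'; rwa [key_vert X hX] at h
      · have h := mv_mem_hl X hX Y hY; rwa [key_horiz Y hY] at h
      · have h := mv_mem_hl X hX Y' hY'; rw [← heq] at h; rwa [key_horiz Y hY] at h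
    exact hrs ((hall A hA).trans (hall X₁ hX₁).symm)
  -- singleton intersections
  have J3 : ∀ X ∈ ℓ₁, ∀ Y ∈ ℓ₂, gl X ≠ hl Y → ∀ u, u ∈ gl X → u ∈ hl Y → u = mv X Y := by
    intro X hX Y hY hne u hu1 hu2
    by_contra hneq
    apply hne
    rw [key_vert X hX, key_horiz Y hY]
    refine two_lines_eq (hgen_v X hX) (hgen_h Y hY) hneq ?_ ?_ ?_ ?_
    · rw [key_vert X hX] at hu1; exact hu1
    · have h := mv_mem_gl X hX Y hY; rwa [key_vert X hX] at h
    · rw [key_horiz Y hY] at hu2; exact hu2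
    · have h := mv_mem_hl X hX Y hY; rwa [key_horiz Y hY] at h
  -- every vertical line is a horizontal line and conversely
  haveI : FiniteDimensional K ↥W₀ := by
    rw [hW₀def, hLAdef, hLSdef]
    infer_instance
  have KKg : ∀ X ∈ ℓ₁, ∃ Y ∈ ℓ₂, hl Y = gl X := by
    intro X hX
    by_contra hcon
    push_neg at hcon
    have hX'mem : (if X = A then X₁ else A) ∈ ℓ₁ := by
      by_cases h : X = A <;> simp [h, hA, hX₁]
    set X' := if X = A then X₁ else A with hX'def
    have hXX' : X ≠ X' := by
      rw [hX'def]
      by_cases h : X = A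
      · simpa [h] using hAX
      · simpa [h] using h
    obtain ⟨z, hz1, hz2⟩ := lines_meet (hgen_v X hX) (hgen_v X' hX'mem) hfW₀
      (gl_sub X hX) (gl_sub X' hX'mem)
    rw [← key_vert X hX] at hz1
    rw [← key_vert X' hX'mem] at hz2
    obtain ⟨Y, hY, hzY⟩ := (mem_gl X hX z).mp hz1
    obtain ⟨Y', hY', hzY'⟩ := (mem_gl X' hX'mem z).mp hz2
    have hYY' : Y ≠ Y' := by
      rintro rfl
      exact row_inj Y hY X hX X' hX'mem hXX' (hzY.trans hzY'.symm)
    have hz3 : z = mv X Y' := by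
      refine J3 X hX Y' hY' (Ne.symm (hcon Y' hY')) z hz1 ?_
      rw [← hzY']
      exact mv_mem_hl X' hX'mem Y' hY'
    exact col_inj X hX Y hY Y' hY' hYY' (hzY.trans hz3)
  have KKh : ∀ Y ∈ ℓ₂, ∃ X ∈ ℓ₁, gl X = hl Y := by
    intro Y hY
    by_contra hcon
    push_neg at hcon
    have hY'mem : (if Y = u₂ then v₂ else u₂) ∈ ℓ₂ := by
      by_cases h : Y = u₂ <;> simp [h, hu₂, hv₂]
    set Y' := if Y = u₂ then v₂ else u₂ with hY'def
    have hYY' : Y ≠ Y' := by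
      rw [hY'def]
      by_cases h : Y = u₂
      · simpa [h] using huv₂
      · simpa [h] using h
    obtain ⟨z, hz1, hz2⟩ := lines_meet (hgen_h Y hY) (hgen_h Y' hY'mem) hfW₀
      (hl_sub Y hY) (hl_sub Y' hY'mem)
    rw [← key_horiz Y hY] at hz1
    rw [← key_horiz Y' hY'mem] at hz2
    obtain ⟨XB, hXB, hzB⟩ := (mem_hl Y' hY'mem z).mp hz2
    have hz3 : z = mv XB Y := by
      refine J3 XB hXB Y hY (hcon XB hXB) z ?_ hz1
      rw [← hzB]
      exact mv_mem_gl XB hXB Y' hY'mem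
    have : mv XB Y = mv XB Y' := by rw [← hz3, ← hzB]
    exact col_inj XB hXB Y hY Y' hY'mem hYY' this
  -- main construction
  intro X hX
  obtain ⟨YX, hYX, hBX⟩ := KKg X hX
  have huniq : ∀ u ∈ gl X, ∀ X' ∈ ℓ₁, X' ≠ X → u ∈ gl X' →
      ∃ Y' ∈ ℓ₂, Y' ≠ YX ∧ hl Y' = gl X' ∧ u = mv X Y' := by
    intro u hu X' hX'm hne hmem
    obtain ⟨Y', hY', hB'⟩ := KKg X' hX'm
    have hY'X : Y' ≠ YX := by
      intro e
      exact hne (g_inj X' hX'm X hX (by rw [← hB', e, hBX]))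
    have hlgl : gl X ≠ hl Y' := by
      intro e
      exact hY'X (h_inj Y' hY' YX hYX ((e.symm).trans hBX.symm))
    exact ⟨Y', hY', hY'X, hB', J3 X hX Y' hY' hlgl u hu (by rw [hB']; exact hmem)⟩
  refine ⟨mv X YX, ⟨mv_mem_gl X hX YX hYX, ?_⟩, ?_, ?_⟩
  · -- W_X lies on no other line
    intro X' hX'm hne hmem
    obtain ⟨Y', hY', hY'X, hB', heq⟩ :=
      huniq (mv X YX) (mv_mem_gl X hX YX hYX) X' hX'm hne hmem
    exact col_inj X hX YX hYX Y' hY' (Ne.symm hY'X) heq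
  · -- uniqueness of the distinguished point
    intro u hu hno
    obtain ⟨Y, hY, hmvY⟩ := (mem_gl X hX u).mp hu
    by_cases hYeq : Y = YX
    · rw [← hmvY, hYeq]
    · exfalso
      obtain ⟨X'', hX''m, hG⟩ := KKh Y hY
      have hX''ne : X'' ≠ X := by
        rintro rfl
        exact hYeq (h_inj Y hY YX hYX (hG.symm.trans hBX.symm))
      refine hno X'' hX''m hX''ne ?_
      rw [hG, ← hmvY]
      exact mv_mem_hl X hX Y hY
  · -- exactly one other line through each other point
    intro u hu hune
    obtain ⟨Y, hY, hmvY⟩ := (mem_gl X hX u).mp hu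
    have hYne : Y ≠ YX := by
      intro h
      subst h
      exact hune hmvY.symm
    obtain ⟨X'', hX''m, hG⟩ := KKh Y hY
    have hX''ne : X'' ≠ X := by
      rintro rfl
      exact hYne (h_inj Y hY YX hYX (hG.symm.trans hBX.symm))
    have hu'' : u ∈ gl X'' := by
      rw [hG, ← hmvY]
      exact mv_mem_hl X hX Y hY
    refine ⟨gl X'', ⟨⟨X'', hX''m, hX''ne, rfl⟩, hu''⟩, ?_⟩
    rintro h' ⟨⟨X3, hX3, hX3ne, rfl⟩, hu3⟩
    by_contra hdiff
    have hX3X'' : X3 ≠ X'' := by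
      rintro rfl
      exact hdiff rfl
    obtain ⟨Y3, hY3, hY3X, hB3, he3⟩ := huniq u hu X3 hX3 hX3ne hu3
    obtain ⟨Y4, hY4, hY4X, hB4, he4⟩ := huniq u hu X'' hX''m hX''ne hu''
    have hY34 : Y3 ≠ Y4 := by
      intro e
      apply hX3X''
      exact g_inj X3 hX3 X'' hX''m (by rw [← hB3, e, hB4])
    exact col_inj X hX Y3 hY3 Y4 hY4 hY34 (he3.symm.trans he4)

end StatementFifteen
end

section
/- Let χ: ℙ₁ × ℙ₂ → ℙ' be a linear map, g ∈ 𝒢₁, and P₀, P₁, P₂ three distinct points on a line of ℙ₂. Assume g × {P₁} and g × {P₂} are contained in D(χ), that h₁ := (g × {P₁})χ and h₂ := (g × {P₂})χ are distinct lines of ℙ', and that h₀ := (g × {P₀})χ is a single point. Then h₀ does not lie on h₁ ∪ h₂, the lines h₁ and h₂ lie in the plane h₀ ∨ h₁, and for every P ∈ g the point (P, P₂)χ is the intersection of h₂ with the line of ℙ' joining h₀ and (P, P₁)χ; consequently the map h₁ → h₂ sending (P, P₁)χ to (P, P₂)χ (P ∈ g) is the perspectivity from h₁ to h₂ with center h₀.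 -/
open Set

namespace SegreAux
open Segre Set Projectivization

section Proj
variable {K W : Type*} [Field K] [AddCommGroup W] [Module K W]

theorem mem_pLT_left (x y : Projectivization K W) : x ∈ projLineThrough x y :=
  Set.mem_setOf_eq ▸ le_sup_left
theorem mem_pLT_right (x y : Projectivization K W) : y ∈ projLineThrough x y :=
  Set.mem_setOf_eq ▸ le_sup_right
theorem pLT_mem {x y : Projectivization K W} (h : x ≠ y) :
    projLineThrough x y ∈ projLines K W := ⟨x, y, h, rfl⟩

theorem finrank_sup_two (x y : Projectivization K W) (h : x ≠ y) :
    Module.finrank K ↥(x.submodule ⊔ y.submodule) = 2 := by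
  have h1 := x.finrank_submodule
  have h2 := y.finrank_submodule
  have hle : Module.finrank K ↥(x.submodule ⊔ y.submodule) ≤ 2 := by
    have := Submodule.finrank_add_le_finrank_add_finrank x.submodule y.submodule
    omega
  have hge : 2 ≤ Module.finrank K ↥(x.submodule ⊔ y.submodule) := by
    by_contra hc
    push_neg at hc
    have e1 : x.submodule = x.submodule ⊔ y.submodule :=
      Submodule.eq_of_le_of_finrank_le le_sup_left (by omega)
    have e2 : y.submodule = x.submodule ⊔ y.submodule :=
      Submodule.eq_of_le_of_finrank_le le_sup_right (by omega)
    exact h (submodule_injective (e1.trans e2.symm))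
  omega

theorem pLT_unique {x y a b : Projectivization K W} (hxy : x ≠ y) (hab : a ≠ b)
    (ha : a ∈ projLineThrough x y) (hb : b ∈ projLineThrough x y) :
    projLineThrough a b = projLineThrough x y := by
  have hsub : a.submodule ⊔ b.submodule = x.submodule ⊔ y.submodule := by
    have : FiniteDimensional K ↥(x.submodule ⊔ y.submodule) :=
      Submodule.finiteDimensional_sup _ _
    refine Submodule.eq_of_le_of_finrank_le (sup_le ha hb) ?_
    rw [finrank_sup_two x y hxy, finrank_sup_two a b hab]
  unfold projLineThrough
  rw [hsub]

theorem line_eq_pLT {ℓ : Set (Projectivization K W)} (hℓ : ℓ ∈ projLines K W)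
    {a b : Projectivization K W} (hab : a ≠ b) (ha : a ∈ ℓ) (hb : b ∈ ℓ) :
    ℓ = projLineThrough a b := by
  obtain ⟨x, y, hxy, rfl⟩ := hℓ
  exact (pLT_unique hxy hab ha hb).symm

theorem lines_eq {ℓ₁ ℓ₂ : Set (Projectivization K W)} (m₁ : ℓ₁ ∈ projLines K W)
    (m₂ : ℓ₂ ∈ projLines K W) {a b : Projectivization K W} (hab : a ≠ b)
    (ha₁ : a ∈ ℓ₁) (hb₁ : b ∈ ℓ₁) (ha₂ : a ∈ ℓ₂) (hb₂ : b ∈ ℓ₂) : ℓ₁ = ℓ₂ :=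
  (line_eq_pLT m₁ hab ha₁ hb₁).trans (line_eq_pLT m₂ hab ha₂ hb₂).symm

theorem lineThru_proj {a b : Projectivization K W} (hab : a ≠ b) :
    lineThru (projLines K W) a b = projLineThrough a b := by
  apply subset_antisymm
  · intro z hz
    simp only [lineThru, mem_iUnion, mem_sep_iff] at hz
    obtain ⟨ℓ, ⟨hℓ, ha, hb⟩, hzℓ⟩ := hz
    rwa [line_eq_pLT hℓ hab ha hb] at hzℓ
  · intro z hz
    simp only [lineThru, mem_iUnion, mem_sep_iff]
    exact ⟨projLineThrough a b, ⟨pLT_mem hab, mem_pLT_left a b, mem_pLT_right a b⟩, hz⟩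

theorem collin_proj {a b : Projectivization K W} (hab : a ≠ b) :
    Collin (projLines K W) a b :=
  ⟨projLineThrough a b, pLT_mem hab, mem_pLT_left a b, mem_pLT_right a b⟩

theorem sJoin_pair {a b : Projectivization K W} (hab : a ≠ b) :
    sJoin (projLines K W) {a} {b} = projLineThrough a b := by
  apply subset_antisymm
  · intro z hz
    rcases hz with (hz | hz) | hz
    · exact mem_singleton_iff.mp hz ▸ mem_pLT_left a b
    · exact mem_singleton_iff.mp hz ▸ mem_pLT_right a b
    · simp only [mem_iUnion, mem_singleton_iff] at hz
      obtain ⟨x, rfl, y, rfl, -, hz⟩ := hz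
      rwa [lineThru_proj hab] at hz
  · intro z hz
    refine Or.inr ?_
    simp only [mem_iUnion, mem_singleton_iff]
    exact ⟨a, rfl, b, rfl, ⟨hab, collin_proj hab⟩, (lineThru_proj hab).symm ▸ hz⟩

theorem sJoin_empty_left (L : Set (Set (Projectivization K W)))
    (M : Set (Projectivization K W)) : sJoin L ∅ M = M := by
  simp [sJoin]

theorem sJoin_self (L : Set (Set (Projectivization K W))) (a : Projectivization K W) :
    sJoin L {a} {a} = {a} := by
  simp [sJoin]

end Proj

theorem mem_mapSet_row {A B C : Type*} {χ : A × B → Option C} {g : Set A} {Y : B} {z : C} :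
    z ∈ mapSet χ (g ×ˢ ({Y} : Set B)) ↔ ∃ Q ∈ g, χ (Q, Y) = some z := by
  constructor
  · intro h
    simp only [mapSet, mem_iUnion] at h
    obtain ⟨⟨a, b⟩, ⟨ha, hb⟩, hz⟩ := h
    obtain rfl := mem_singleton_iff.mp hb
    exact ⟨a, ha, hz⟩
  · rintro ⟨Q, hQ, e⟩
    simp only [mapSet, mem_iUnion]
    exact ⟨(Q, Y), ⟨hQ, rfl⟩, e⟩

theorem sJoin_two_pts {P : Type*} (L : Set (Set P)) {X Y : P} (hne : X ≠ Y)
    (hcol : Collin L X Y) :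
    sJoin L {X} {Y} = lineThru L X Y := by
  obtain ⟨s, hs, hXs, hYs⟩ := hcol
  have hXl : X ∈ lineThru L X Y := by
    simp only [lineThru, mem_iUnion, mem_sep_iff]
    exact ⟨s, ⟨hs, hXs, hYs⟩, hXs⟩
  have hYl : Y ∈ lineThru L X Y := by
    simp only [lineThru, mem_iUnion, mem_sep_iff]
    exact ⟨s, ⟨hs, hXs, hYs⟩, hYs⟩
  apply subset_antisymm
  · intro z hz
    rcases hz with (hz | hz) | hz
    · exact mem_singleton_iff.mp hz ▸ hXl
    · exact mem_singleton_iff.mp hz ▸ hYl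
    · simp only [mem_iUnion, mem_singleton_iff] at hz
      obtain ⟨x, rfl, y, rfl, -, hz⟩ := hz
      exact hz
  · intro z hz
    refine Or.inr ?_
    simp only [mem_iUnion, mem_singleton_iff]
    exact ⟨X, rfl, Y, rfl, ⟨hne, s, hs, hXs, hYs⟩, hz⟩

section Grid

variable {K₁ V₁ K₂ V₂ : Type*} [Field K₁] [AddCommGroup V₁] [Module K₁ V₁]
  [Field K₂] [AddCommGroup V₂] [Module K₂ V₂]


theorem col_mem_prodLines {g' : Set (Projectivization K₂ V₂)} (hg' : g' ∈ projLines K₂ V₂) (X : (Projectivization K₁ V₁)) :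
    ({X} : Set (Projectivization K₁ V₁)) ×ˢ g' ∈ (prodLines (projLines K₁ V₁) (projLines K₂ V₂)) := Or.inl ⟨X, g', hg', rfl⟩

theorem row_mem_prodLines {g : Set (Projectivization K₁ V₁)} (hg : g ∈ projLines K₁ V₁) (Y : (Projectivization K₂ V₂)) :
    g ×ˢ ({Y} : Set (Projectivization K₂ V₂)) ∈ (prodLines (projLines K₁ V₁) (projLines K₂ V₂)) := Or.inr ⟨g, hg, Y, rfl⟩

theorem lineThru_col {g' : Set (Projectivization K₂ V₂)} (hg' : g' ∈ projLines K₂ V₂)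
    (X : (Projectivization K₁ V₁)) {Y Y' : (Projectivization K₂ V₂)} (hYY' : Y ≠ Y') (hY : Y ∈ g') (hY' : Y' ∈ g') :
    lineThru (prodLines (projLines K₁ V₁) (projLines K₂ V₂)) (X, Y) (X, Y') = ({X} : Set (Projectivization K₁ V₁)) ×ˢ g' := by
  have hg'' : g' = projLineThrough Y Y' := line_eq_pLT hg' hYY' hY hY'
  apply subset_antisymm
  · intro z hz
    simp only [lineThru, mem_iUnion, mem_sep_iff] at hz
    obtain ⟨s, ⟨hs, h₁, h₂⟩, hzs⟩ := hz
    rcases hs with ⟨X₁, g₂, hg₂, rfl⟩ | ⟨g₁, hg₁, X₂, rfl⟩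
    · obtain ⟨hX₁, hYg₂⟩ := h₁
      obtain ⟨-, hY'g₂⟩ := h₂
      simp only [mem_singleton_iff] at hX₁
      have heq : g₂ = projLineThrough Y Y' := line_eq_pLT hg₂ hYY' hYg₂ hY'g₂
      rw [← hg''] at heq
      rwa [heq, ← hX₁] at hzs
    · exact absurd (h₁.2.trans h₂.2.symm) hYY'
  · intro z hz
    simp only [lineThru, mem_iUnion, mem_sep_iff]
    exact ⟨({X} : Set (Projectivization K₁ V₁)) ×ˢ g', ⟨col_mem_prodLines hg' X, ⟨rfl, hY⟩, ⟨rfl, hY'⟩⟩, hz⟩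

theorem lineThru_row {g : Set (Projectivization K₁ V₁)} (hg : g ∈ projLines K₁ V₁)
    (Y : (Projectivization K₂ V₂)) {X X' : (Projectivization K₁ V₁)} (hXX' : X ≠ X') (hX : X ∈ g) (hX' : X' ∈ g) :
    lineThru (prodLines (projLines K₁ V₁) (projLines K₂ V₂)) (X, Y) (X', Y) = g ×ˢ ({Y} : Set (Projectivization K₂ V₂)) := by
  have hg'' : g = projLineThrough X X' := line_eq_pLT hg hXX' hX hX'
  apply subset_antisymm
  · intro z hz
    simp only [lineThru, mem_iUnion, mem_sep_iff] at hz
    obtain ⟨s, ⟨hs, h₁, h₂⟩, hzs⟩ := hz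
    rcases hs with ⟨X₁, g₂, hg₂, rfl⟩ | ⟨g₁, hg₁, X₂, rfl⟩
    · exfalso
      simp only [mem_prod, mem_singleton_iff] at h₁ h₂
      exact hXX' (h₁.1.trans h₂.1.symm)
    · obtain ⟨hXg₁, hY₁⟩ := h₁
      obtain ⟨hX'g₁, -⟩ := h₂
      simp only [mem_singleton_iff] at hY₁
      have heq : g₁ = projLineThrough X X' := line_eq_pLT hg₁ hXX' hXg₁ hX'g₁
      rw [← hg''] at heq
      rwa [heq, ← hY₁] at hzs
  · intro z hz
    simp only [lineThru, mem_iUnion, mem_sep_iff]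
    exact ⟨g ×ˢ ({Y} : Set (Projectivization K₂ V₂)), ⟨row_mem_prodLines hg Y, ⟨hX, rfl⟩, ⟨hX', rfl⟩⟩, hz⟩

variable {K W : Type*} [Field K] [AddCommGroup W] [Module K W]
  {χ : (Projectivization K₁ V₁) × (Projectivization K₂ V₂) → Option (Projectivization K W)}
  {g : Set (Projectivization K₁ V₁)} {g' : Set (Projectivization K₂ V₂)} {P₀ P₁ P₂ : (Projectivization K₂ V₂)} {z₀ : Projectivization K W}

theorem inj_row (hχ : IsLinMap (prodLines (projLines K₁ V₁) (projLines K₂ V₂)) (projLines K W) χ) (hg : g ∈ projLines K₁ V₁)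
    (Y : (Projectivization K₂ V₂)) (hdom : ∀ q ∈ g ×ˢ ({Y} : Set (Projectivization K₂ V₂)), χ q ≠ none)
    {Q Q' : (Projectivization K₁ V₁)} (hQ : Q ∈ g) (hQ' : Q' ∈ g) {z : Projectivization K W}
    (e : χ (Q, Y) = some z) (e' : χ (Q', Y) = some z) : Q = Q' := by
  by_contra hne'
  have hcol : Collin (prodLines (projLines K₁ V₁) (projLines K₂ V₂)) (Q, Y) (Q', Y) :=
    ⟨_, row_mem_prodLines hg Y, ⟨hQ, rfl⟩, ⟨hQ', rfl⟩⟩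
  have hpt : ptImg χ (Q, Y) = ptImg χ (Q', Y) := by
    ext u
    simp [ptImg, e, e']
  obtain ⟨Z, hZ, hZnone⟩ :=
    hχ.2 _ _ hcol (fun h => hne' (congrArg Prod.fst h)) hpt
  rw [lineThru_row hg Y hne' hQ hQ'] at hZ
  exact hdom Z hZ hZnone

theorem colImg (hχ : IsLinMap (prodLines (projLines K₁ V₁) (projLines K₂ V₂)) (projLines K W) χ) (hg' : g' ∈ projLines K₂ V₂)
    (Q : (Projectivization K₁ V₁)) {Y Y' : (Projectivization K₂ V₂)} (hY : Y ∈ g') (hY' : Y' ∈ g') (hYY' : Y ≠ Y') :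
    mapSet χ (({Q} : Set (Projectivization K₁ V₁)) ×ˢ g')
      = sJoin (projLines K W) (ptImg χ (Q, Y)) (ptImg χ (Q, Y')) := by
  have hcol : Collin (prodLines (projLines K₁ V₁) (projLines K₂ V₂)) (Q, Y) (Q, Y') :=
    ⟨_, col_mem_prodLines hg' Q, ⟨rfl, hY⟩, ⟨rfl, hY'⟩⟩
  have hne' : (Q, Y) ≠ (Q, Y') := fun h => hYY' (congrArg Prod.snd h)
  have h := hχ.1 (Q, Y) (Q, Y') hcol
  rwa [sJoin_two_pts _ hne' hcol, lineThru_col hg' Q hYY' hY hY'] at h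

theorem ptImg_of_none {X : (Projectivization K₁ V₁) × (Projectivization K₂ V₂)} (e : χ X = none) : ptImg χ X = ∅ := by
  ext u; simp [ptImg, e]

theorem ptImg_of_some {X : (Projectivization K₁ V₁) × (Projectivization K₂ V₂)} {w : Projectivization K W} (e : χ X = some w) :
    ptImg χ X = {w} := by
  ext u; simp [ptImg, e, eq_comm]

theorem pt0_cases (hz₀ : mapSet χ (g ×ˢ ({P₀} : Set (Projectivization K₂ V₂))) = {z₀}) {Q : (Projectivization K₁ V₁)} (hQ : Q ∈ g) :
    ptImg χ (Q, P₀) = ∅ ∨ ptImg χ (Q, P₀) = {z₀} := by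
  cases e : χ (Q, P₀) with
  | none => exact Or.inl (ptImg_of_none e)
  | some w =>
    have hw : w = z₀ := by
      have hmem : w ∈ mapSet χ (g ×ˢ ({P₀} : Set (Projectivization K₂ V₂))) := mem_mapSet_row.mpr ⟨Q, hQ, e⟩
      rwa [hz₀, mem_singleton_iff] at hmem
    exact Or.inr (hw ▸ ptImg_of_some e)

theorem keyB (hχ : IsLinMap (prodLines (projLines K₁ V₁) (projLines K₂ V₂)) (projLines K W) χ) (hg' : g' ∈ projLines K₂ V₂)
    (h0 : P₀ ∈ g') (h1 : P₁ ∈ g') (h2 : P₂ ∈ g')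
    (d01 : P₀ ≠ P₁) (d02 : P₀ ≠ P₂) (d12 : P₁ ≠ P₂)
    (hz₀ : mapSet χ (g ×ˢ ({P₀} : Set (Projectivization K₂ V₂))) = {z₀})
    {Q : (Projectivization K₁ V₁)} (hQ : Q ∈ g) {y₁ y₂ : Projectivization K W}
    (e₁ : χ (Q, P₁) = some y₁) (e₂ : χ (Q, P₂) = some y₂) (hy : y₁ ≠ y₂) :
    z₀ ≠ y₁ ∧ z₀ ≠ y₂ ∧ projLineThrough y₁ y₂ = projLineThrough z₀ y₁ := by
  have i1 : ptImg χ (Q, P₁) = {y₁} := ptImg_of_some e₁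
  have i2 : ptImg χ (Q, P₂) = {y₂} := ptImg_of_some e₂
  have c12 : mapSet χ (({Q} : Set (Projectivization K₁ V₁)) ×ˢ g') = projLineThrough y₁ y₂ := by
    rw [colImg hχ hg' Q h1 h2 d12, i1, i2, sJoin_pair hy]
  have c01 : mapSet χ (({Q} : Set (Projectivization K₁ V₁)) ×ˢ g')
      = sJoin (projLines K W) (ptImg χ (Q, P₀)) {y₁} := by
    rw [colImg hχ hg' Q h0 h1 d01, i1]
  have c02 : mapSet χ (({Q} : Set (Projectivization K₁ V₁)) ×ˢ g')
      = sJoin (projLines K W) (ptImg χ (Q, P₀)) {y₂} := by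
    rw [colImg hχ hg' Q h0 h2 d02, i2]
  have hy1mem : y₁ ∈ mapSet χ (({Q} : Set (Projectivization K₁ V₁)) ×ˢ g') := c12 ▸ mem_pLT_left y₁ y₂
  have hy2mem : y₂ ∈ mapSet χ (({Q} : Set (Projectivization K₁ V₁)) ×ˢ g') := c12 ▸ mem_pLT_right y₁ y₂
  rcases pt0_cases hz₀ hQ with hp | hp
  · rw [hp, sJoin_empty_left] at c01
    exact absurd (mem_singleton_iff.mp (c01 ▸ hy2mem)).symm hy
  · rw [hp] at c01 c02
    have hz1 : z₀ ≠ y₁ := by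
      intro h
      rw [h, sJoin_self] at c01
      exact hy (mem_singleton_iff.mp (c01 ▸ hy2mem)).symm
    have hz2 : z₀ ≠ y₂ := by
      intro h
      rw [h, sJoin_self] at c02
      exact hy (mem_singleton_iff.mp (c02 ▸ hy1mem))
    refine ⟨hz1, hz2, ?_⟩
    rw [sJoin_pair hz1] at c01
    exact c12.symm.trans c01

theorem notinAux (hχ : IsLinMap (prodLines (projLines K₁ V₁) (projLines K₂ V₂)) (projLines K W) χ)
    (hg : g ∈ projLines K₁ V₁) (hg' : g' ∈ projLines K₂ V₂)
    (h0 : P₀ ∈ g') (h1 : P₁ ∈ g') (h2 : P₂ ∈ g')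
    (d01 : P₀ ≠ P₁) (d02 : P₀ ≠ P₂) (d12 : P₁ ≠ P₂)
    (hdom1 : ∀ q ∈ g ×ˢ ({P₁} : Set (Projectivization K₂ V₂)), χ q ≠ none)
    (hdom2 : ∀ q ∈ g ×ˢ ({P₂} : Set (Projectivization K₂ V₂)), χ q ≠ none)
    (hh1 : mapSet χ (g ×ˢ ({P₁} : Set (Projectivization K₂ V₂))) ∈ projLines K W)
    (hh2 : mapSet χ (g ×ˢ ({P₂} : Set (Projectivization K₂ V₂))) ∈ projLines K W)
    (hne : mapSet χ (g ×ˢ ({P₁} : Set (Projectivization K₂ V₂))) ≠ mapSet χ (g ×ˢ ({P₂} : Set (Projectivization K₂ V₂))))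
    (hz₀ : mapSet χ (g ×ˢ ({P₀} : Set (Projectivization K₂ V₂))) = {z₀}) :
    z₀ ∉ mapSet χ (g ×ˢ ({P₁} : Set (Projectivization K₂ V₂))) := by
  intro hmem
  obtain ⟨Qs, hQs, e₁s⟩ := mem_mapSet_row.mp hmem
  obtain ⟨y₂s, e₂s⟩ := Option.ne_none_iff_exists'.mp (hdom2 (Qs, P₂) ⟨hQs, rfl⟩)
  by_cases hcase : z₀ = y₂s
  · -- z₀ ∈ h₂ as well
    subst hcase
    have hz₀h2 : z₀ ∈ mapSet χ (g ×ˢ ({P₂} : Set (Projectivization K₂ V₂))) := mem_mapSet_row.mpr ⟨Qs, hQs, e₂s⟩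
    obtain ⟨u, v, huv, hguv⟩ := id hg
    have hu : u ∈ g := hguv ▸ mem_pLT_left u v
    have hv : v ∈ g := hguv ▸ mem_pLT_right u v
    obtain ⟨Q, hQ, hQne⟩ : ∃ Q ∈ g, Q ≠ Qs := by
      by_cases h : u = Qs
      · exact ⟨v, hv, fun hh => huv (h ▸ hh ▸ rfl)⟩
      · exact ⟨u, hu, h⟩
    obtain ⟨y₁, e₁⟩ := Option.ne_none_iff_exists'.mp (hdom1 (Q, P₁) ⟨hQ, rfl⟩)
    obtain ⟨y₂, e₂⟩ := Option.ne_none_iff_exists'.mp (hdom2 (Q, P₂) ⟨hQ, rfl⟩)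
    have hy1ne : y₁ ≠ z₀ := fun h => hQne (inj_row hχ hg P₁ hdom1 hQ hQs (h ▸ e₁) e₁s)
    have hy2ne : y₂ ≠ z₀ := fun h => hQne (inj_row hχ hg P₂ hdom2 hQ hQs (h ▸ e₂) e₂s)
    by_cases hy : y₁ = y₂
    · exact hne (lines_eq hh1 hh2 hy1ne (mem_mapSet_row.mpr ⟨Q, hQ, e₁⟩) hmem
        (mem_mapSet_row.mpr ⟨Q, hQ, hy ▸ e₂⟩) hz₀h2)
    · obtain ⟨hz1, hz2, hline⟩ := keyB hχ hg' h0 h1 h2 d01 d02 d12 hz₀ hQ e₁ e₂ hy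
      have hh1e : mapSet χ (g ×ˢ ({P₁} : Set (Projectivization K₂ V₂))) = projLineThrough z₀ y₁ :=
        line_eq_pLT hh1 hz1 hmem (mem_mapSet_row.mpr ⟨Q, hQ, e₁⟩)
      have hy2h1 : y₂ ∈ mapSet χ (g ×ˢ ({P₁} : Set (Projectivization K₂ V₂))) := by
        rw [hh1e, ← hline]
        exact mem_pLT_right y₁ y₂
      exact hne (lines_eq hh1 hh2 hy2ne hy2h1 hmem
        (mem_mapSet_row.mpr ⟨Q, hQ, e₂⟩) hz₀h2)
  · obtain ⟨hz1, -, -⟩ :=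
      keyB hχ hg' h0 h1 h2 d01 d02 d12 hz₀ hQs e₁s e₂s hcase
    exact hz1 rfl

end Grid

end SegreAux

open Segre Set in
/-- Proposition `esistefi`, case 3: if `h₀ = (g × {P₀})χ` is a single
point and `h₁ ≠ h₂` are lines, then the map `(P, P₁)χ ↦ (P, P₂)χ` is the perspectivity
from `h₁` to `h₂` with center `h₀`. -/
theorem statement_16 (F : Type*) [Field F] (n m : ℕ) (hn : 2 ≤ n) (hm : 1 ≤ m)
    (K W : Type*) [Field K] [AddCommGroup W] [Module K W]
    (χ : PGPt F n × PGPt F m → Option (Projectivization K W))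
    (hχ : IsLinMap (prodLines (PGLines F n) (PGLines F m)) (projLines K W) χ)
    (g : Set (PGPt F n)) (hg : g ∈ PGLines F n)
    (g' : Set (PGPt F m)) (hg' : g' ∈ PGLines F m)
    (P₀ P₁ P₂ : PGPt F m) (h0 : P₀ ∈ g') (h1 : P₁ ∈ g') (h2 : P₂ ∈ g')
    (d01 : P₀ ≠ P₁) (d02 : P₀ ≠ P₂) (d12 : P₁ ≠ P₂)
    (hdom1 : ∀ q ∈ g ×ˢ ({P₁} : Set (PGPt F m)), χ q ≠ none)
    (hdom2 : ∀ q ∈ g ×ˢ ({P₂} : Set (PGPt F m)), χ q ≠ none)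
    (hh1 : mapSet χ (g ×ˢ ({P₁} : Set (PGPt F m))) ∈ projLines K W)
    (hh2 : mapSet χ (g ×ˢ ({P₂} : Set (PGPt F m))) ∈ projLines K W)
    (hne : mapSet χ (g ×ˢ ({P₁} : Set (PGPt F m)))
      ≠ mapSet χ (g ×ˢ ({P₂} : Set (PGPt F m))))
    (z₀ : Projectivization K W)
    (hz₀ : mapSet χ (g ×ˢ ({P₀} : Set (PGPt F m))) = {z₀}) :
    z₀ ∉ mapSet χ (g ×ˢ ({P₁} : Set (PGPt F m))) ∧
    z₀ ∉ mapSet χ (g ×ˢ ({P₂} : Set (PGPt F m))) ∧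
    mapSet χ (g ×ˢ ({P₁} : Set (PGPt F m))) ⊆
      sJoin (projLines K W) ({z₀} : Set (Projectivization K W))
        (mapSet χ (g ×ˢ ({P₁} : Set (PGPt F m)))) ∧
    mapSet χ (g ×ˢ ({P₂} : Set (PGPt F m))) ⊆
      sJoin (projLines K W) ({z₀} : Set (Projectivization K W))
        (mapSet χ (g ×ˢ ({P₁} : Set (PGPt F m)))) ∧
    ∀ P ∈ g, ∀ y₁ y₂ : Projectivization K W,
      χ (P, P₁) = some y₁ → χ (P, P₂) = some y₂ →
      mapSet χ (g ×ˢ ({P₂} : Set (PGPt F m))) ∩ projLineThrough z₀ y₁ = {y₂} := by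
  classical
  classical
  have notin1 : z₀ ∉ mapSet χ (g ×ˢ ({P₁} : Set (PGPt F m))) :=
    SegreAux.notinAux hχ hg hg' h0 h1 h2 d01 d02 d12 hdom1 hdom2 hh1 hh2 hne hz₀
  have notin2 : z₀ ∉ mapSet χ (g ×ˢ ({P₂} : Set (PGPt F m))) :=
    SegreAux.notinAux hχ hg hg' h0 h2 h1 d02 d01 d12.symm hdom2 hdom1 hh2 hh1 hne.symm hz₀
  refine ⟨notin1, notin2, fun x hx => Or.inl (Or.inr hx), ?_, ?_⟩
  · intro w hw
    obtain ⟨Q, hQ, e₂⟩ := SegreAux.mem_mapSet_row.mp hw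
    obtain ⟨y₁, e₁⟩ := Option.ne_none_iff_exists'.mp (hdom1 (Q, P₁) ⟨hQ, rfl⟩)
    by_cases hy : y₁ = w
    · exact Or.inl (Or.inr (SegreAux.mem_mapSet_row.mpr ⟨Q, hQ, hy ▸ e₁⟩))
    · obtain ⟨hz1, hz2, hline⟩ :=
        SegreAux.keyB hχ hg' h0 h1 h2 d01 d02 d12 hz₀ hQ e₁ e₂ hy
      refine Or.inr ?_
      simp only [mem_iUnion, mem_singleton_iff]
      refine ⟨z₀, rfl, y₁, SegreAux.mem_mapSet_row.mpr ⟨Q, hQ, e₁⟩,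
        ⟨hz1, SegreAux.collin_proj hz1⟩, ?_⟩
      rw [SegreAux.lineThru_proj hz1, ← hline]
      exact SegreAux.mem_pLT_right y₁ w
  · intro Pp hP y₁ y₂ e₁ e₂
    have hy1h1 : y₁ ∈ mapSet χ (g ×ˢ ({P₁} : Set (PGPt F m))) :=
      SegreAux.mem_mapSet_row.mpr ⟨Pp, hP, e₁⟩
    have hy2h2 : y₂ ∈ mapSet χ (g ×ˢ ({P₂} : Set (PGPt F m))) :=
      SegreAux.mem_mapSet_row.mpr ⟨Pp, hP, e₂⟩
    have hz1 : z₀ ≠ y₁ := fun h => notin1 (h ▸ hy1h1)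
    have hy2line : y₂ ∈ projLineThrough z₀ y₁ := by
      by_cases hy : y₁ = y₂
      · exact hy ▸ SegreAux.mem_pLT_right z₀ y₁
      · obtain ⟨-, -, hline⟩ :=
          SegreAux.keyB hχ hg' h0 h1 h2 d01 d02 d12 hz₀ hP e₁ e₂ hy
        rw [← hline]
        exact SegreAux.mem_pLT_right y₁ y₂
    apply subset_antisymm
    · rintro w ⟨hwh2, hwline⟩
      rw [mem_singleton_iff]
      by_contra hww
      have heq : projLineThrough z₀ y₁ = mapSet χ (g ×ˢ ({P₂} : Set (PGPt F m))) :=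
        SegreAux.lines_eq (SegreAux.pLT_mem hz1) hh2 hww hwline hy2line hwh2 hy2h2
      exact notin2 (heq ▸ SegreAux.mem_pLT_left z₀ y₁)
    · intro w hw
      rw [mem_singleton_iff] at hw
      subst hw
      exact ⟨hy2h2, hy2line⟩
end

section
/- Let χ: ℙ₁ × ℙ₂ → ℙ' be a linear map, g ∈ 𝒢₁, and P₀, P₁, P₂ three distinct points on a line of ℙ₂; set h_i := (g × {P_i})χ for i = 0, 1, 2. Assume g × {P₁} and g × {P₂} are contained in D(χ) and that h₁ and h₂ are skew lines of ℙ' (distinct lines with empty intersection). Then h₀ is a line and any two of h₀, h₁, h₂ are skew; moreover, for every P ∈ g the point (P, P₂)χ is the unique point of h₂ lying in the join {(P, P₁)χ} ∨ h₀, and the resulting map h₁ → h₂ sending (P, P₁)χ to (P, P₂)χ is a projectivity. -/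
open Set

/-!
For `P ∈ g`, (L1) maps the line `{P} × g'` onto the line through `(P, P₁)χ` and `(P, P₂)χ`,
which differ because `h₁` and `h₂` are skew; hence `(P, P₀)χ` exists and is a third point of
this transversal of `h₁` and `h₂`, and `h₀` is a line. A point of `h₀` on `h₁` (or `h₂`) would
drag the whole transversal into `h₁` (or `h₂`). As `h₀` and `h₂` are skew, `h₂` meets the plane
`{(P, P₁)χ} ∨ h₀` in `(P, P₂)χ` only, and the projection onto `span h₂` along a complement
containing `span h₀` maps every `(P, P₁)χ` to `(P, P₂)χ`.
-/

namespace Segre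

open Set Module Projectivization
open scoped LinearAlgebra.Projectivization

section Semilinear

variable {P Q : Type*}

lemma mem_mapSet {χ : P → Option Q} {M : Set P} {u : Q} :
    u ∈ mapSet χ M ↔ ∃ X ∈ M, χ X = some u := by
  simp [mapSet, ptImg]

lemma mem_mapSet_prod_singleton {P₁ P₂ : Type*} {χ : P₁ × P₂ → Option Q} {g : Set P₁} {P : P₂}
    {u : Q} : u ∈ mapSet χ (g ×ˢ {P}) ↔ ∃ R ∈ g, χ (R, P) = some u := by
  simp [mem_mapSet]

lemma ptImg_of_eq_some {χ : P → Option Q} {X : P} {a : Q} (h : χ X = some a) :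
    ptImg χ X = {a} := by
  ext; simp [ptImg, h, eq_comm]

lemma ptImg_of_eq_none {χ : P → Option Q} {X : P} (h : χ X = none) : ptImg χ X = ∅ := by
  ext; simp [ptImg, h]

lemma lineThru_eq {L : Set (Set P)} {ℓ : Set P} (hℓ : ℓ ∈ L) {x y : P} (hx : x ∈ ℓ) (hy : y ∈ ℓ)
    (huniq : ∀ g ∈ L, x ∈ g → y ∈ g → g = ℓ) : lineThru L x y = ℓ := by
  refine Subset.antisymm (fun z hz => ?_) (fun z hz => mem_biUnion ⟨hℓ, hx, hy⟩ hz)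
  obtain ⟨g, ⟨hg, hxg, hyg⟩, hzg⟩ := mem_iUnion₂.1 hz
  exact huniq g hg hxg hyg ▸ hzg

lemma sJoin_singleton_singleton {L : Set (Set P)} {x y : P} (hxy : x ≠ y) (h : Collin L x y) :
    sJoin L {x} {y} = lineThru L x y := by
  obtain ⟨g, hg, hx, hy⟩ := h
  ext z
  simp only [sJoin, mem_union, mem_singleton_iff, mem_iUnion, exists_prop, exists_eq_left]
  refine ⟨?_, fun hz => Or.inr ⟨⟨hxy, g, hg, hx, hy⟩, hz⟩⟩
  rintro ((rfl | rfl) | ⟨-, hz⟩)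
  exacts [mem_biUnion ⟨hg, hx, hy⟩ hx, mem_biUnion ⟨hg, hx, hy⟩ hy, hz]

lemma sJoin_singleton_empty (L : Set (Set P)) (a : P) : sJoin L {a} ∅ = {a} := by
  simp [sJoin]

end Semilinear

section Projective

variable {K W : Type*} [Field K] [AddCommGroup W] [Module K W]

lemma isAtom_submodule (x : ℙ K W) : IsAtom x.submodule :=
  Submodule.isAtom_iff_finrank_eq_one.2 x.finrank_submodule

lemma finrank_sup_submodule {x y : ℙ K W} (hxy : x ≠ y) :
    finrank K ↥(x.submodule ⊔ y.submodule) = 2 := by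
  have h := Submodule.finrank_sup_add_finrank_inf_eq x.submodule y.submodule
  have hbot : x.submodule ⊓ y.submodule = ⊥ := disjoint_iff.1 <|
    (isAtom_submodule x).disjoint_of_ne (isAtom_submodule y) (submodule_injective.ne hxy)
  rw [hbot, finrank_bot, x.finrank_submodule, y.finrank_submodule] at h
  omega

lemma two_le_finrank_of_ne {S : Submodule K W} [FiniteDimensional K S] {x y : ℙ K W}
    (hxy : x ≠ y) (hx : x.submodule ≤ S) (hy : y.submodule ≤ S) : 2 ≤ finrank K S :=
  finrank_sup_submodule hxy ▸ Submodule.finrank_mono (sup_le hx hy)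

lemma submodule_le_sup_of_le_sup {x y z : ℙ K W} (hxy : x ≠ y) (hzx : z ≠ x)
    (hz : z.submodule ≤ x.submodule ⊔ y.submodule) :
    y.submodule ≤ x.submodule ⊔ z.submodule :=
  have hxz : x.submodule ⊔ z.submodule = x.submodule ⊔ y.submodule :=
    Submodule.eq_of_le_of_finrank_le (sup_le le_sup_left hz)
      (by rw [finrank_sup_submodule hxy, finrank_sup_submodule hzx.symm])
  hxz ▸ le_sup_right

def IsThirdPointOn (c a b : ℙ K W) : Prop :=
  a ≠ b ∧ c ≠ a ∧ c ≠ b ∧ c.submodule ≤ a.submodule ⊔ b.submodule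

lemma le_spanOf {M : Set (ℙ K W)} {x : ℙ K W} (hx : x ∈ M) : x.submodule ≤ spanOf M :=
  le_iSup₂_of_le x hx le_rfl

lemma spanOf_singleton (x : ℙ K W) : spanOf {x} = x.submodule := by
  simp [spanOf]

lemma mem_projLineThrough_left (x y : ℙ K W) : x ∈ projLineThrough x y :=
  show x.submodule ≤ _ from le_sup_left

lemma mem_projLineThrough_right (x y : ℙ K W) : y ∈ projLineThrough x y :=
  show y.submodule ≤ _ from le_sup_right

lemma spanOf_projLineThrough (x y : ℙ K W) :
    spanOf (projLineThrough x y) = x.submodule ⊔ y.submodule :=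
  le_antisymm (iSup₂_le fun _ hz => hz)
    (sup_le (le_spanOf (mem_projLineThrough_left x y)) (le_spanOf (mem_projLineThrough_right x y)))

lemma mem_iff_le_spanOf {h : Set (ℙ K W)} (hh : h ∈ projLines K W) {z : ℙ K W} :
    z ∈ h ↔ z.submodule ≤ spanOf h := by
  obtain ⟨x, y, -, rfl⟩ := hh
  rw [spanOf_projLineThrough]
  rfl

lemma finrank_spanOf {h : Set (ℙ K W)} (hh : h ∈ projLines K W) : finrank K (spanOf h) = 2 := by
  obtain ⟨x, y, hxy, rfl⟩ := hh
  rw [spanOf_projLineThrough, finrank_sup_submodule hxy]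

lemma finiteDimensional_spanOf {h : Set (ℙ K W)} (hh : h ∈ projLines K W) :
    FiniteDimensional K (spanOf h) :=
  Module.finite_of_finrank_eq_succ (finrank_spanOf hh)

lemma spanOf_eq_sup {h : Set (ℙ K W)} (hh : h ∈ projLines K W) {x y : ℙ K W} (hxy : x ≠ y)
    (hx : x ∈ h) (hy : y ∈ h) : spanOf h = x.submodule ⊔ y.submodule := by
  have := finiteDimensional_spanOf hh
  refine (Submodule.eq_of_le_of_finrank_le ?_ ?_).symm
  · exact sup_le ((mem_iff_le_spanOf hh).1 hx) ((mem_iff_le_spanOf hh).1 hy)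
  · rw [finrank_spanOf hh, finrank_sup_submodule hxy]

lemma projLines_eq_of_mem {h h' : Set (ℙ K W)} (hh : h ∈ projLines K W)
    (hh' : h' ∈ projLines K W) {x y : ℙ K W} (hxy : x ≠ y) (hx : x ∈ h) (hy : y ∈ h)
    (hx' : x ∈ h') (hy' : y ∈ h') : h = h' := by
  ext z
  rw [mem_iff_le_spanOf hh, mem_iff_le_spanOf hh', spanOf_eq_sup hh hxy hx hy,
    spanOf_eq_sup hh' hxy hx' hy']

lemma projLineThrough_mem_projLines {x y : ℙ K W} (hxy : x ≠ y) :
    projLineThrough x y ∈ projLines K W :=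
  ⟨x, y, hxy, rfl⟩

lemma lineThru_projLines {x y : ℙ K W} (hxy : x ≠ y) :
    lineThru (projLines K W) x y = projLineThrough x y :=
  lineThru_eq (projLineThrough_mem_projLines hxy) (mem_projLineThrough_left x y)
    (mem_projLineThrough_right x y) fun _ hg hx hy =>
      projLines_eq_of_mem hg (projLineThrough_mem_projLines hxy) hxy hx hy
        (mem_projLineThrough_left x y) (mem_projLineThrough_right x y)

lemma sJoin_projLines_singleton_singleton {x y : ℙ K W} (hxy : x ≠ y) :
    sJoin (projLines K W) {x} {y} = projLineThrough x y := by
  rw [sJoin_singleton_singleton hxy ⟨_, projLineThrough_mem_projLines hxy,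
    mem_projLineThrough_left x y, mem_projLineThrough_right x y⟩, lineThru_projLines hxy]

lemma le_sup_spanOf_of_mem_sJoin {M₁ M₂ : Set (ℙ K W)} {z : ℙ K W}
    (hz : z ∈ sJoin (projLines K W) M₁ M₂) : z.submodule ≤ spanOf M₁ ⊔ spanOf M₂ := by
  simp only [sJoin, mem_union, mem_iUnion, exists_prop] at hz
  obtain (hz | hz) | ⟨x, hx, y, hy, ⟨hxy, -⟩, hz⟩ := hz
  · exact le_sup_of_le_left (le_spanOf hz)
  · exact le_sup_of_le_right (le_spanOf hz)
  · rw [lineThru_projLines hxy] at hz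
    exact hz.trans (sup_le_sup (le_spanOf hx) (le_spanOf hy))

lemma mem_sJoin_of_le_sup {M₁ M₂ : Set (ℙ K W)} {x y z : ℙ K W} (hx : x ∈ M₁) (hy : y ∈ M₂)
    (hxy : x ≠ y) (hz : z.submodule ≤ x.submodule ⊔ y.submodule) :
    z ∈ sJoin (projLines K W) M₁ M₂ := by
  refine Or.inr (mem_iUnion₂.2 ⟨x, hx, mem_iUnion₂.2 ⟨y, hy, mem_iUnion.2 ⟨⟨hxy, ?_⟩, ?_⟩⟩⟩)
  · exact ⟨_, projLineThrough_mem_projLines hxy, mem_projLineThrough_left x y,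
      mem_projLineThrough_right x y⟩
  · rwa [lineThru_projLines hxy]

lemma disjoint_spanOf_of_inter_eq_empty {h h' : Set (ℙ K W)} (hh : h ∈ projLines K W)
    (hh' : h' ∈ projLines K W) (hhh' : h ∩ h' = ∅) : Disjoint (spanOf h) (spanOf h') := by
  rw [Submodule.disjoint_def]
  intro v hv hv'
  by_contra hv0
  have hz : mk K v hv0 ∈ h ∩ h' := by
    rw [mem_inter_iff, mem_iff_le_spanOf hh, mem_iff_le_spanOf hh', submodule_mk,
      Submodule.span_singleton_le_iff_mem, Submodule.span_singleton_le_iff_mem]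
    exact ⟨hv, hv'⟩
  simp [hhh'] at hz

lemma not_le_of_le_sup {U U' : Submodule K W} (hUU' : Disjoint U U') {x y z : ℙ K W}
    (hxy : x ≠ y) (hzx : z ≠ x) (hz : z.submodule ≤ x.submodule ⊔ y.submodule)
    (hx : x.submodule ≤ U) (hy : y.submodule ≤ U') : ¬ z.submodule ≤ U := fun hzU =>
  (isAtom_submodule y).1 <| le_bot_iff.1 <|
    hUU' ((submodule_le_sup_of_le_sup hxy hzx hz).trans (sup_le hx hzU)) hy

lemma inter_eq_empty_of_transversals {h₀ h₁ h₂ : Set (ℙ K W)} (hh₁ : h₁ ∈ projLines K W)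
    (hh₂ : h₂ ∈ projLines K W) (h₁₂ : h₁ ∩ h₂ = ∅)
    (H : ∀ u ∈ h₀, ∃ x ∈ h₁, ∃ y ∈ h₂, IsThirdPointOn u x y) :
    h₀ ∩ h₁ = ∅ ∧ h₀ ∩ h₂ = ∅ := by
  have hU := disjoint_spanOf_of_inter_eq_empty hh₁ hh₂ h₁₂
  refine ⟨eq_empty_iff_forall_notMem.2 fun u ⟨hu₀, hu₁⟩ => ?_,
    eq_empty_iff_forall_notMem.2 fun u ⟨hu₀, hu₂⟩ => ?_⟩ <;>
    obtain ⟨x, hx, y, hy, hxy, hux, huy, hu⟩ := H u hu₀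
  · exact not_le_of_le_sup hU hxy hux hu ((mem_iff_le_spanOf hh₁).1 hx)
      ((mem_iff_le_spanOf hh₂).1 hy) ((mem_iff_le_spanOf hh₁).1 hu₁)
  · exact not_le_of_le_sup hU.symm hxy.symm huy (sup_comm x.submodule _ ▸ hu)
      ((mem_iff_le_spanOf hh₂).1 hy) ((mem_iff_le_spanOf hh₁).1 hx) ((mem_iff_le_spanOf hh₂).1 hu₂)

lemma ne_of_inter_eq_empty {h h' : Set (ℙ K W)} (hh : h ∈ projLines K W) (hhh' : h ∩ h' = ∅) :
    h ≠ h' := by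
  rintro rfl
  obtain ⟨x, y, -, rfl⟩ := hh
  rw [inter_self] at hhh'
  exact hhh'.subset (mem_projLineThrough_left x y)

lemma inter_sJoin_eq_singleton {h₀ h₂ : Set (ℙ K W)} (hh₀ : h₀ ∈ projLines K W)
    (hh₂ : h₂ ∈ projLines K W) (h₀₂ : h₀ ∩ h₂ = ∅) {x y : ℙ K W} (hy : y ∈ h₂)
    (hyx : y ∈ sJoin (projLines K W) {x} h₀) :
    h₂ ∩ sJoin (projLines K W) {x} h₀ = {y} := by
  refine eq_singleton_iff_unique_mem.2 ⟨⟨hy, hyx⟩, fun z ⟨hz, hzx⟩ => ?_⟩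
  by_contra hzy
  have := finiteDimensional_spanOf hh₀
  have := finiteDimensional_spanOf hh₂
  set S := x.submodule ⊔ spanOf h₀
  have hS : finrank K S ≤ 3 := by
    have := Submodule.finrank_add_le_finrank_add_finrank x.submodule (spanOf h₀)
    rw [x.finrank_submodule, finrank_spanOf hh₀] at this
    omega
  have hinf : 2 ≤ finrank K ↥(spanOf h₂ ⊓ S) := by
    refine two_le_finrank_of_ne hzy (le_inf ((mem_iff_le_spanOf hh₂).1 hz) ?_)
      (le_inf ((mem_iff_le_spanOf hh₂).1 hy) ?_)
    · simpa [S, spanOf_singleton] using le_sup_spanOf_of_mem_sJoin hzx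
    · simpa [S, spanOf_singleton] using le_sup_spanOf_of_mem_sJoin hyx
  have h₀₂' : finrank K ↥(spanOf h₀ ⊔ spanOf h₂) = 4 := by
    have := Submodule.finrank_sup_add_finrank_inf_eq (spanOf h₀) (spanOf h₂)
    rw [disjoint_iff.1 (disjoint_spanOf_of_inter_eq_empty hh₀ hh₂ h₀₂), finrank_bot,
      finrank_spanOf hh₀, finrank_spanOf hh₂] at this
    omega
  have hsup : finrank K ↥(spanOf h₀ ⊔ spanOf h₂) ≤ finrank K ↥(spanOf h₂ ⊔ S) :=
    Submodule.finrank_mono (sup_le (le_sup_of_le_right le_sup_right) le_sup_left)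
  have := Submodule.finrank_sup_add_finrank_inf_eq (spanOf h₂) S
  rw [finrank_spanOf hh₂] at this
  omega

lemma map_submodule_eq_of_le_sup {T : W →ₗ[K] W} {x y z : ℙ K W}
    (hy : y.submodule ≤ x.submodule ⊔ z.submodule) (hTy : ∀ v ∈ y.submodule, T v = v)
    (hTz : z.submodule ≤ LinearMap.ker T) : x.submodule.map T = y.submodule := by
  have hle : y.submodule ≤ x.submodule.map T := calc
    y.submodule ≤ y.submodule.map T := fun v hv => ⟨v, hv, hTy v hv⟩
    _ ≤ (x.submodule ⊔ z.submodule).map T := Submodule.map_mono hy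
    _ = x.submodule.map T := by
      rw [Submodule.map_sup, LinearMap.le_ker_iff_map.1 hTz, sup_bot_eq]
  refine (Submodule.eq_of_le_of_finrank_le hle ?_).symm
  rw [y.finrank_submodule, ← x.finrank_submodule]
  exact Submodule.finrank_map_le T _

lemma exists_linearMap_eq_self_of_disjoint {U V : Submodule K W} (hUV : Disjoint U V) :
    ∃ T : W →ₗ[K] W, (∀ v ∈ V, T v = v) ∧ U ≤ LinearMap.ker T := by
  obtain ⟨C, hUC, hC⟩ := hUV.exists_isCompl
  exact ⟨V.projection C hC.symm, fun _ hv => Submodule.projection_apply_of_mem_left hC.symm hv,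
    hUC.trans (Submodule.ker_projection hC.symm).ge⟩

lemma map_spanOf_eq {W' : Type*} [AddCommGroup W'] [Module K W'] {T : W →ₗ[K] W'}
    {A : Set (ℙ K W)} {B : Set (ℙ K W')}
    (hAB : ∀ x ∈ A, ∃ y ∈ B, x.submodule.map T = y.submodule)
    (hBA : ∀ y ∈ B, ∃ x ∈ A, x.submodule.map T = y.submodule) :
    (spanOf A).map T = spanOf B := by
  refine le_antisymm (Submodule.map_le_iff_le_comap.2 (iSup₂_le fun x hx => ?_))
    (iSup₂_le fun y hy => ?_)
  · obtain ⟨y, hy, e⟩ := hAB x hx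
    rw [← Submodule.map_le_iff_le_comap, e]
    exact le_spanOf hy
  · obtain ⟨x, hx, e⟩ := hBA y hy
    rw [← e]
    exact Submodule.map_mono (le_spanOf hx)

end Projective

section Product

variable {F V₁ V₂ K W : Type*} [Field F] [AddCommGroup V₁] [Module F V₁] [AddCommGroup V₂]
  [Module F V₂] [Field K] [AddCommGroup W] [Module K W]

local notation "𝓛" => prodLines (projLines F V₁) (projLines F V₂)

lemma prodLines_eq_of_mem {ℓ ℓ' : Set (ℙ F V₁ × ℙ F V₂)} (hℓ : ℓ ∈ 𝓛) (hℓ' : ℓ' ∈ 𝓛)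
    {X Y : ℙ F V₁ × ℙ F V₂} (hXY : X ≠ Y) (hX : X ∈ ℓ) (hY : Y ∈ ℓ) (hX' : X ∈ ℓ')
    (hY' : Y ∈ ℓ') : ℓ = ℓ' := by
  obtain ⟨X₁, X₂⟩ := X
  obtain ⟨Y₁, Y₂⟩ := Y
  rcases hℓ with ⟨A, g, hg, rfl⟩ | ⟨g, hg, A, rfl⟩ <;>
    rcases hℓ' with ⟨A', g', hg', rfl⟩ | ⟨g', hg', A', rfl⟩ <;>
    simp only [mem_prod, mem_singleton_iff] at hX hY hX' hY'
  · have h₂ : X₂ ≠ Y₂ := fun h => hXY (by rw [hX.1, hY.1, h])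
    rw [← hX.1, ← hX'.1, projLines_eq_of_mem hg hg' h₂ hX.2 hY.2 hX'.2 hY'.2]
  · exact absurd (Prod.ext (hX.1.trans hY.1.symm) (hX'.2.trans hY'.2.symm)) hXY
  · exact absurd (Prod.ext (hX'.1.trans hY'.1.symm) (hX.2.trans hY.2.symm)) hXY
  · have h₁ : X₁ ≠ Y₁ := fun h => hXY (by rw [hX.2, hY.2, h])
    rw [← hX.2, ← hX'.2, projLines_eq_of_mem hg hg' h₁ hX.1 hY.1 hX'.1 hY'.1]

lemma lineThru_prodLines {ℓ : Set (ℙ F V₁ × ℙ F V₂)} (hℓ : ℓ ∈ 𝓛) {X Y : ℙ F V₁ × ℙ F V₂}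
    (hX : X ∈ ℓ) (hY : Y ∈ ℓ) (hXY : X ≠ Y) : lineThru 𝓛 X Y = ℓ :=
  lineThru_eq hℓ hX hY fun _ hg hXg hYg => prodLines_eq_of_mem hg hℓ hXY hXg hYg hX hY

namespace IsLinMap

variable {χ : ℙ F V₁ × ℙ F V₂ → Option (ℙ K W)} {ℓ : Set (ℙ F V₁ × ℙ F V₂)}
  {X Y Z : ℙ F V₁ × ℙ F V₂} {a b : ℙ K W}

lemma mapSet_eq_sJoin (hχ : IsLinMap 𝓛 (projLines K W) χ) (hℓ : ℓ ∈ 𝓛) (hX : X ∈ ℓ)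
    (hY : Y ∈ ℓ) (hXY : X ≠ Y) :
    mapSet χ ℓ = sJoin (projLines K W) (ptImg χ X) (ptImg χ Y) := by
  rw [← lineThru_prodLines hℓ hX hY hXY, ← sJoin_singleton_singleton hXY ⟨ℓ, hℓ, hX, hY⟩]
  exact hχ.1 X Y ⟨ℓ, hℓ, hX, hY⟩

lemma mapSet_eq_projLineThrough (hχ : IsLinMap 𝓛 (projLines K W) χ) (hℓ : ℓ ∈ 𝓛)
    (hX : X ∈ ℓ) (hY : Y ∈ ℓ) (hXY : X ≠ Y) (ha : χ X = some a) (hb : χ Y = some b)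
    (hab : a ≠ b) : mapSet χ ℓ = projLineThrough a b := by
  rw [hχ.mapSet_eq_sJoin hℓ hX hY hXY, ptImg_of_eq_some ha, ptImg_of_eq_some hb,
    sJoin_projLines_singleton_singleton hab]

lemma ne_none_of_mem (hχ : IsLinMap 𝓛 (projLines K W) χ) (hℓ : ℓ ∈ 𝓛) (hX : X ∈ ℓ)
    (hY : Y ∈ ℓ) (ha : χ X = some a) (hb : χ Y = some b) (hab : a ≠ b) :
    ∀ Z ∈ ℓ, χ Z ≠ none := by
  intro Z hZ hZ_none
  have hXZ : X ≠ Z := by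
    rintro rfl
    simp [ha] at hZ_none
  have h := hχ.mapSet_eq_sJoin hℓ hX hZ hXZ
  rw [ptImg_of_eq_some ha, ptImg_of_eq_none hZ_none, sJoin_singleton_empty] at h
  exact hab (h ▸ mem_mapSet.2 ⟨Y, hY, hb⟩ : b ∈ ({a} : Set (ℙ K W))).symm

lemma ne_of_forall_ne_none (hχ : IsLinMap 𝓛 (projLines K W) χ) (hℓ : ℓ ∈ 𝓛)
    (hdom : ∀ Z ∈ ℓ, χ Z ≠ none) (hX : X ∈ ℓ) (hY : Y ∈ ℓ) (hXY : X ≠ Y) : χ X ≠ χ Y := by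
  intro h
  obtain ⟨Z, hZ, hZ_none⟩ := hχ.2 X Y ⟨ℓ, hℓ, hX, hY⟩ hXY (by simp [ptImg, h])
  rw [lineThru_prodLines hℓ hX hY hXY] at hZ
  exact hdom Z hZ hZ_none

lemma exists_eq_some_isThirdPointOn (hχ : IsLinMap 𝓛 (projLines K W) χ) (hℓ : ℓ ∈ 𝓛) (hX : X ∈ ℓ)
    (hY : Y ∈ ℓ) (hZ : Z ∈ ℓ) (hXY : X ≠ Y) (hZX : Z ≠ X) (hZY : Z ≠ Y) (ha : χ X = some a)
    (hb : χ Y = some b) (hab : a ≠ b) :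
    ∃ c, χ Z = some c ∧ IsThirdPointOn c a b := by
  have hdom := hχ.ne_none_of_mem hℓ hX hY ha hb hab
  obtain ⟨c, hc⟩ := Option.ne_none_iff_exists'.1 (hdom Z hZ)
  refine ⟨c, hc, hab, ?_, ?_, ?_⟩
  · rintro rfl
    exact hχ.ne_of_forall_ne_none hℓ hdom hZ hX hZX (hc.trans ha.symm)
  · rintro rfl
    exact hχ.ne_of_forall_ne_none hℓ hdom hZ hY hZY (hc.trans hb.symm)
  · have hc' : c ∈ mapSet χ ℓ := mem_mapSet.2 ⟨Z, hZ, hc⟩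
    rwa [hχ.mapSet_eq_projLineThrough hℓ hX hY hXY ha hb hab] at hc'

lemma mapSet_mem_projLines (hχ : IsLinMap 𝓛 (projLines K W) χ) (hℓ : ℓ ∈ 𝓛)
    (hdom : ∀ Z ∈ ℓ, χ Z ≠ none) (hX : X ∈ ℓ) (hY : Y ∈ ℓ) (hXY : X ≠ Y) :
    mapSet χ ℓ ∈ projLines K W := by
  obtain ⟨a, ha⟩ := Option.ne_none_iff_exists'.1 (hdom X hX)
  obtain ⟨b, hb⟩ := Option.ne_none_iff_exists'.1 (hdom Y hY)
  have hab : a ≠ b := fun h => hχ.ne_of_forall_ne_none hℓ hdom hX hY hXY (by rw [ha, hb, h])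
  rw [hχ.mapSet_eq_projLineThrough hℓ hX hY hXY ha hb hab]
  exact projLineThrough_mem_projLines hab

lemma mapSet_prod_singleton_mem_projLines (hχ : IsLinMap 𝓛 (projLines K W) χ)
    {g : Set (ℙ F V₁)} (hg : g ∈ projLines F V₁) {P : ℙ F V₂}
    (hdom : ∀ q ∈ g ×ˢ {P}, χ q ≠ none) : mapSet χ (g ×ˢ {P}) ∈ projLines K W := by
  obtain ⟨x, y, hxy, rfl⟩ := id hg
  exact hχ.mapSet_mem_projLines (X := (x, P)) (Y := (y, P)) (Or.inr ⟨_, hg, P, rfl⟩) hdom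
    ⟨mem_projLineThrough_left x y, rfl⟩ ⟨mem_projLineThrough_right x y, rfl⟩ (by simpa)

lemma exists_isThirdPointOn_of_skew (hχ : IsLinMap 𝓛 (projLines K W) χ) {g : Set (ℙ F V₁)}
    {g' : Set (ℙ F V₂)} (hg' : g' ∈ projLines F V₂) {P₀ P₁ P₂ : ℙ F V₂} (h0 : P₀ ∈ g')
    (h1 : P₁ ∈ g') (h2 : P₂ ∈ g') (d01 : P₀ ≠ P₁) (d02 : P₀ ≠ P₂) (d12 : P₁ ≠ P₂)
    (hdom1 : ∀ q ∈ g ×ˢ {P₁}, χ q ≠ none) (hdom2 : ∀ q ∈ g ×ˢ {P₂}, χ q ≠ none)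
    (hskew : mapSet χ (g ×ˢ {P₁}) ∩ mapSet χ (g ×ˢ {P₂}) = ∅) :
    ∀ R ∈ g, ∃ b₀ b₁ b₂, χ (R, P₀) = some b₀ ∧ χ (R, P₁) = some b₁ ∧ χ (R, P₂) = some b₂ ∧
      IsThirdPointOn b₀ b₁ b₂ := by
  intro R hR
  obtain ⟨b₁, hb₁⟩ := Option.ne_none_iff_exists'.1 (hdom1 (R, P₁) ⟨hR, rfl⟩)
  obtain ⟨b₂, hb₂⟩ := Option.ne_none_iff_exists'.1 (hdom2 (R, P₂) ⟨hR, rfl⟩)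
  have hb : b₁ ≠ b₂ := fun e => hskew.subset
    ⟨mem_mapSet_prod_singleton.2 ⟨R, hR, hb₁⟩, mem_mapSet_prod_singleton.2 ⟨R, hR, e ▸ hb₂⟩⟩
  obtain ⟨b₀, hb₀, hthird⟩ := hχ.exists_eq_some_isThirdPointOn (X := (R, P₁)) (Y := (R, P₂))
    (Z := (R, P₀)) (Or.inl ⟨R, g', hg', rfl⟩) ⟨rfl, h1⟩ ⟨rfl, h2⟩ ⟨rfl, h0⟩ (by simpa)
    (by simpa) (by simpa) hb₁ hb₂ hb
  exact ⟨b₀, b₁, b₂, hb₀, hb₁, hb₂, hthird⟩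

end IsLinMap

end Product

section ThirdPoints

variable {K W α β : Type*} [Field K] [AddCommGroup W] [Module K W]
  {χ : α × β → Option (ℙ K W)} {g : Set α} {P₀ P₁ P₂ : β}

lemma inter_eq_empty_of_forall_isThirdPointOn (hh₁ : mapSet χ (g ×ˢ {P₁}) ∈ projLines K W)
    (hh₂ : mapSet χ (g ×ˢ {P₂}) ∈ projLines K W)
    (hskew : mapSet χ (g ×ˢ {P₁}) ∩ mapSet χ (g ×ˢ {P₂}) = ∅)
    (himg : ∀ R ∈ g, ∃ b₀ b₁ b₂, χ (R, P₀) = some b₀ ∧ χ (R, P₁) = some b₁ ∧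
      χ (R, P₂) = some b₂ ∧ IsThirdPointOn b₀ b₁ b₂) :
    mapSet χ (g ×ˢ {P₀}) ∩ mapSet χ (g ×ˢ {P₁}) = ∅ ∧
      mapSet χ (g ×ˢ {P₀}) ∩ mapSet χ (g ×ˢ {P₂}) = ∅ := by
  refine inter_eq_empty_of_transversals hh₁ hh₂ hskew fun u hu => ?_
  obtain ⟨R, hR, hu⟩ := mem_mapSet_prod_singleton.1 hu
  obtain ⟨b₀, b₁, b₂, hb₀, hb₁, hb₂, hthird⟩ := himg R hR
  obtain rfl := Option.some_injective _ (hu.symm.trans hb₀)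
  exact ⟨b₁, mem_mapSet_prod_singleton.2 ⟨R, hR, hb₁⟩, b₂,
    mem_mapSet_prod_singleton.2 ⟨R, hR, hb₂⟩, hthird⟩

lemma inter_sJoin_eq_singleton_of_forall_isThirdPointOn
    (hh₀ : mapSet χ (g ×ˢ {P₀}) ∈ projLines K W) (hh₂ : mapSet χ (g ×ˢ {P₂}) ∈ projLines K W)
    (h₀₂ : mapSet χ (g ×ˢ {P₀}) ∩ mapSet χ (g ×ˢ {P₂}) = ∅)
    (himg : ∀ R ∈ g, ∃ b₀ b₁ b₂, χ (R, P₀) = some b₀ ∧ χ (R, P₁) = some b₁ ∧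
      χ (R, P₂) = some b₂ ∧ IsThirdPointOn b₀ b₁ b₂)
    {R : α} (hR : R ∈ g) {y₁ y₂ : ℙ K W} (hy₁ : χ (R, P₁) = some y₁)
    (hy₂ : χ (R, P₂) = some y₂) :
    mapSet χ (g ×ˢ {P₂}) ∩ sJoin (projLines K W) {y₁} (mapSet χ (g ×ˢ {P₀})) = {y₂} := by
  obtain ⟨b₀, b₁, b₂, hb₀, hb₁, hb₂, hb, h01, -, hle⟩ := himg R hR
  obtain rfl := Option.some_injective _ (hb₁.symm.trans hy₁)
  obtain rfl := Option.some_injective _ (hb₂.symm.trans hy₂)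
  exact inter_sJoin_eq_singleton hh₀ hh₂ h₀₂ (mem_mapSet_prod_singleton.2 ⟨R, hR, hb₂⟩)
    (mem_sJoin_of_le_sup (mem_singleton _) (mem_mapSet_prod_singleton.2 ⟨R, hR, hb₀⟩) h01.symm
      (submodule_le_sup_of_le_sup hb h01 hle))

lemma exists_linearMap_of_forall_isThirdPointOn
    (hh₀ : mapSet χ (g ×ˢ {P₀}) ∈ projLines K W) (hh₂ : mapSet χ (g ×ˢ {P₂}) ∈ projLines K W)
    (h₀₂ : mapSet χ (g ×ˢ {P₀}) ∩ mapSet χ (g ×ˢ {P₂}) = ∅)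
    (himg : ∀ R ∈ g, ∃ b₀ b₁ b₂, χ (R, P₀) = some b₀ ∧ χ (R, P₁) = some b₁ ∧
      χ (R, P₂) = some b₂ ∧ IsThirdPointOn b₀ b₁ b₂) :
    ∃ T : W →ₗ[K] W,
      (spanOf (mapSet χ (g ×ˢ {P₁}))).map T = spanOf (mapSet χ (g ×ˢ {P₂})) ∧
      ∀ R ∈ g, ∀ y₁ y₂ : ℙ K W, χ (R, P₁) = some y₁ → χ (R, P₂) = some y₂ →
        y₁.submodule.map T = y₂.submodule := by
  obtain ⟨T, hT_fix, hT_ker⟩ :=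
    exists_linearMap_eq_self_of_disjoint (disjoint_spanOf_of_inter_eq_empty hh₀ hh₂ h₀₂)
  have hT : ∀ R ∈ g, ∀ y₁ y₂ : ℙ K W, χ (R, P₁) = some y₁ → χ (R, P₂) = some y₂ →
      y₁.submodule.map T = y₂.submodule := by
    intro R hR y₁ y₂ hy₁ hy₂
    obtain ⟨b₀, b₁, b₂, hb₀, hb₁, hb₂, hb, h01, -, hle⟩ := himg R hR
    obtain rfl := Option.some_injective _ (hb₁.symm.trans hy₁)
    obtain rfl := Option.some_injective _ (hb₂.symm.trans hy₂)
    exact map_submodule_eq_of_le_sup (submodule_le_sup_of_le_sup hb h01 hle)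
      (fun v hv => hT_fix v (le_spanOf (mem_mapSet_prod_singleton.2 ⟨R, hR, hb₂⟩) hv))
      ((le_spanOf (mem_mapSet_prod_singleton.2 ⟨R, hR, hb₀⟩)).trans hT_ker)
  refine ⟨T, map_spanOf_eq (fun u hu => ?_) (fun u hu => ?_), hT⟩
  · obtain ⟨R, hR, hu⟩ := mem_mapSet_prod_singleton.1 hu
    obtain ⟨-, -, b₂, -, -, hb₂, -⟩ := himg R hR
    exact ⟨b₂, mem_mapSet_prod_singleton.2 ⟨R, hR, hb₂⟩, hT R hR u b₂ hu hb₂⟩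
  · obtain ⟨R, hR, hu⟩ := mem_mapSet_prod_singleton.1 hu
    obtain ⟨-, b₁, -, -, hb₁, -⟩ := himg R hR
    exact ⟨b₁, mem_mapSet_prod_singleton.2 ⟨R, hR, hb₁⟩, hT R hR b₁ u hb₁ hu⟩

end ThirdPoints

end Segre

open Segre Set in
theorem statement_17_general (F : Type*) [Field F] (n m : ℕ)
    (K W : Type*) [Field K] [AddCommGroup W] [Module K W]
    (χ : PGPt F n × PGPt F m → Option (Projectivization K W))
    (hχ : IsLinMap (prodLines (PGLines F n) (PGLines F m)) (projLines K W) χ)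
    (g : Set (PGPt F n)) (hg : g ∈ PGLines F n)
    (g' : Set (PGPt F m)) (hg' : g' ∈ PGLines F m)
    (P₀ P₁ P₂ : PGPt F m) (h0 : P₀ ∈ g') (h1 : P₁ ∈ g') (h2 : P₂ ∈ g')
    (d01 : P₀ ≠ P₁) (d02 : P₀ ≠ P₂) (d12 : P₁ ≠ P₂)
    (hdom1 : ∀ q ∈ g ×ˢ ({P₁} : Set (PGPt F m)), χ q ≠ none)
    (hdom2 : ∀ q ∈ g ×ˢ ({P₂} : Set (PGPt F m)), χ q ≠ none)
    (hskew : mapSet χ (g ×ˢ ({P₁} : Set (PGPt F m))) ∩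
      mapSet χ (g ×ˢ ({P₂} : Set (PGPt F m))) = ∅) :
    mapSet χ (g ×ˢ ({P₀} : Set (PGPt F m))) ∈ projLines K W ∧
    (mapSet χ (g ×ˢ ({P₀} : Set (PGPt F m))) ∩
        mapSet χ (g ×ˢ ({P₁} : Set (PGPt F m))) = ∅ ∧
      mapSet χ (g ×ˢ ({P₀} : Set (PGPt F m))) ≠ mapSet χ (g ×ˢ ({P₁} : Set (PGPt F m)))) ∧
    (mapSet χ (g ×ˢ ({P₀} : Set (PGPt F m))) ∩
        mapSet χ (g ×ˢ ({P₂} : Set (PGPt F m))) = ∅ ∧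
      mapSet χ (g ×ˢ ({P₀} : Set (PGPt F m))) ≠ mapSet χ (g ×ˢ ({P₂} : Set (PGPt F m)))) ∧
    (∀ P ∈ g, ∀ y₁ y₂ : Projectivization K W,
      χ (P, P₁) = some y₁ → χ (P, P₂) = some y₂ →
      mapSet χ (g ×ˢ ({P₂} : Set (PGPt F m))) ∩
        sJoin (projLines K W) ({y₁} : Set (Projectivization K W))
          (mapSet χ (g ×ˢ ({P₀} : Set (PGPt F m)))) = {y₂}) ∧
    ∃ T : W →ₗ[K] W,
      Submodule.map T (spanOf (mapSet χ (g ×ˢ ({P₁} : Set (PGPt F m)))))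
        = spanOf (mapSet χ (g ×ˢ ({P₂} : Set (PGPt F m)))) ∧
      ∀ P ∈ g, ∀ y₁ y₂ : Projectivization K W,
        χ (P, P₁) = some y₁ → χ (P, P₂) = some y₂ →
        Submodule.map T y₁.submodule = y₂.submodule := by
  have himg := hχ.exists_isThirdPointOn_of_skew hg' h0 h1 h2 d01 d02 d12 hdom1 hdom2 hskew
  have hdom0 : ∀ q ∈ g ×ˢ ({P₀} : Set (PGPt F m)), χ q ≠ none := by
    rintro ⟨R, _⟩ ⟨hR, rfl⟩
    obtain ⟨b₀, -, -, hb₀, -⟩ := himg R hR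
    simp [hb₀]
  have hh₀ := hχ.mapSet_prod_singleton_mem_projLines hg hdom0
  have hh₂ := hχ.mapSet_prod_singleton_mem_projLines hg hdom2
  obtain ⟨h₀₁, h₀₂⟩ := inter_eq_empty_of_forall_isThirdPointOn
    (hχ.mapSet_prod_singleton_mem_projLines hg hdom1) hh₂ hskew himg
  refine ⟨hh₀, ⟨h₀₁, ne_of_inter_eq_empty hh₀ h₀₁⟩, ⟨h₀₂, ne_of_inter_eq_empty hh₀ h₀₂⟩,
    fun P hP y₁ y₂ hy₁ hy₂ =>
      inter_sJoin_eq_singleton_of_forall_isThirdPointOn hh₀ hh₂ h₀₂ himg hP hy₁ hy₂,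
    exists_linearMap_of_forall_isThirdPointOn hh₀ hh₂ h₀₂ himg⟩

open Segre Set in
/-- Proposition `esistefi`, case 1: if `h₁` and `h₂` are skew lines,
then `h₀` is a line, any two of `h₀, h₁, h₂` are skew, `(P, P₂)χ` is the unique point of
`h₂` in `{(P, P₁)χ} ∨ h₀`, and the map `(P, P₁)χ ↦ (P, P₂)χ` is a projectivity. -/
theorem statement_17 (F : Type*) [Field F] (n m : ℕ) (hn : 2 ≤ n) (hm : 1 ≤ m)
    (K W : Type*) [Field K] [AddCommGroup W] [Module K W]
    (χ : PGPt F n × PGPt F m → Option (Projectivization K W))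
    (hχ : IsLinMap (prodLines (PGLines F n) (PGLines F m)) (projLines K W) χ)
    (g : Set (PGPt F n)) (hg : g ∈ PGLines F n)
    (g' : Set (PGPt F m)) (hg' : g' ∈ PGLines F m)
    (P₀ P₁ P₂ : PGPt F m) (h0 : P₀ ∈ g') (h1 : P₁ ∈ g') (h2 : P₂ ∈ g')
    (d01 : P₀ ≠ P₁) (d02 : P₀ ≠ P₂) (d12 : P₁ ≠ P₂)
    (hdom1 : ∀ q ∈ g ×ˢ ({P₁} : Set (PGPt F m)), χ q ≠ none)
    (hdom2 : ∀ q ∈ g ×ˢ ({P₂} : Set (PGPt F m)), χ q ≠ none)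
    (hh1 : mapSet χ (g ×ˢ ({P₁} : Set (PGPt F m))) ∈ projLines K W)
    (hh2 : mapSet χ (g ×ˢ ({P₂} : Set (PGPt F m))) ∈ projLines K W)
    (hne : mapSet χ (g ×ˢ ({P₁} : Set (PGPt F m)))
      ≠ mapSet χ (g ×ˢ ({P₂} : Set (PGPt F m))))
    (hskew : mapSet χ (g ×ˢ ({P₁} : Set (PGPt F m))) ∩
      mapSet χ (g ×ˢ ({P₂} : Set (PGPt F m))) = ∅) :
    mapSet χ (g ×ˢ ({P₀} : Set (PGPt F m))) ∈ projLines K W ∧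
    (mapSet χ (g ×ˢ ({P₀} : Set (PGPt F m))) ∩
        mapSet χ (g ×ˢ ({P₁} : Set (PGPt F m))) = ∅ ∧
      mapSet χ (g ×ˢ ({P₀} : Set (PGPt F m))) ≠ mapSet χ (g ×ˢ ({P₁} : Set (PGPt F m)))) ∧
    (mapSet χ (g ×ˢ ({P₀} : Set (PGPt F m))) ∩
        mapSet χ (g ×ˢ ({P₂} : Set (PGPt F m))) = ∅ ∧
      mapSet χ (g ×ˢ ({P₀} : Set (PGPt F m))) ≠ mapSet χ (g ×ˢ ({P₂} : Set (PGPt F m)))) ∧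
    (∀ P ∈ g, ∀ y₁ y₂ : Projectivization K W,
      χ (P, P₁) = some y₁ → χ (P, P₂) = some y₂ →
      mapSet χ (g ×ˢ ({P₂} : Set (PGPt F m))) ∩
        sJoin (projLines K W) ({y₁} : Set (Projectivization K W))
          (mapSet χ (g ×ˢ ({P₀} : Set (PGPt F m)))) = {y₂}) ∧
    ∃ T : W →ₗ[K] W,
      Submodule.map T (spanOf (mapSet χ (g ×ˢ ({P₁} : Set (PGPt F m)))))
        = spanOf (mapSet χ (g ×ˢ ({P₂} : Set (PGPt F m)))) ∧
      ∀ P ∈ g, ∀ y₁ y₂ : Projectivization K W,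
        χ (P, P₁) = some y₁ → χ (P, P₂) = some y₂ →
        Submodule.map T y₁.submodule = y₂.submodule :=
  statement_17_general F n m K W χ hχ g hg g' hg' P₀ P₁ P₂ h0 h1 h2 d01 d02 d12 hdom1 hdom2 hskew
end

section
/- For every linear map χ: ℙ₁ × ℙ₂ → ℙ', the first radical rad₁χ := {X ∈ 𝒫₁ : {X} × 𝒫₂ ⊆ A(χ)} is a subspace of ℙ₁, and the second radical rad₂χ := {Y ∈ 𝒫₂ : 𝒫₁ × {Y} ⊆ A(χ)} is a subspace of ℙ₂ (a subspace of a projective space being a set of points which, with any two distinct points, contains the whole line through them). -/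
open Set

open Segre Set in
/-- the first and second radical of a linear map `χ : ℙ₁ × ℙ₂ → ℙ'`
are subspaces of `ℙ₁` and `ℙ₂` respectively. -/
theorem statement_18 (F : Type*) [Field F] (n m : ℕ) (hn : 2 ≤ n) (hm : 1 ≤ m)
    (K W : Type*) [Field K] [AddCommGroup W] [Module K W]
    (χ : PGPt F n × PGPt F m → Option (Projectivization K W))
    (hχ : IsLinMap (prodLines (PGLines F n) (PGLines F m)) (projLines K W) χ) :
    (∀ x y : PGPt F n, (∀ Y, χ (x, Y) = none) → (∀ Y, χ (y, Y) = none) → x ≠ y →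
      ∀ z ∈ projLineThrough x y, ∀ Y, χ (z, Y) = none) ∧
    (∀ x y : PGPt F m, (∀ X, χ (X, x) = none) → (∀ X, χ (X, y) = none) → x ≠ y →
      ∀ z ∈ projLineThrough x y, ∀ X, χ (X, z) = none) := by
  have key : ∀ (p q r : PGPt F n × PGPt F m) (g : Set (PGPt F n × PGPt F m)),
      g ∈ prodLines (PGLines F n) (PGLines F m) → p ∈ g → q ∈ g → r ∈ g →
      p ≠ q → χ p = none → χ q = none → χ r = none := by
    intro p q r g hg hp hq hr hne hcp hcq
    have hcol : Collin (prodLines (PGLines F n) (PGLines F m)) p q := ⟨g, hg, hp, hq⟩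
    have h1 := hχ.1 p q hcol
    have hpi : ptImg χ p = ∅ := by
      ext w; simp [ptImg, hcp]
    have hqi : ptImg χ q = ∅ := by
      ext w; simp [ptImg, hcq]
    rw [hpi, hqi] at h1
    have hjoin : sJoin (projLines K W) (∅ : Set (Projectivization K W)) ∅ = ∅ := by
      simp [sJoin]
    rw [hjoin] at h1
    have hrmem : r ∈ sJoin (prodLines (PGLines F n) (PGLines F m)) {p} {q} := by
      refine Or.inr ?_
      refine mem_iUnion.2 ⟨p, mem_iUnion.2 ⟨rfl, mem_iUnion.2 ⟨q, mem_iUnion.2 ⟨rfl,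
        mem_iUnion.2 ⟨⟨hne, hcol⟩, ?_⟩⟩⟩⟩⟩
      exact mem_iUnion.2 ⟨g, mem_iUnion.2 ⟨⟨hg, hp, hq⟩, hr⟩⟩
    have : ptImg χ r ⊆ (∅ : Set (Projectivization K W)) := by
      rw [← h1]
      exact fun w hw => mem_iUnion.2 ⟨r, mem_iUnion.2 ⟨hrmem, hw⟩⟩
    cases hc : χ r with
    | none => rfl
    | some w => exact absurd (this (show w ∈ ptImg χ r from hc)) (notMem_empty w)
  constructor
  · intro x y hx hy hne z hz Y
    have hline : projLineThrough x y ∈ PGLines F n := ⟨x, y, hne, rfl⟩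
    have hg : (projLineThrough x y ×ˢ ({Y} : Set (PGPt F m))) ∈
        prodLines (PGLines F n) (PGLines F m) :=
      Or.inr ⟨projLineThrough x y, hline, Y, rfl⟩
    exact key (x, Y) (y, Y) (z, Y) _ hg ⟨(le_sup_left : x.submodule ≤ _), rfl⟩ ⟨(le_sup_right : y.submodule ≤ _), rfl⟩
      ⟨hz, rfl⟩ (by simp [hne]) (hx Y) (hy Y)
  · intro x y hx hy hne z hz X
    have hline : projLineThrough x y ∈ PGLines F m := ⟨x, y, hne, rfl⟩
    have hg : (({X} : Set (PGPt F n)) ×ˢ projLineThrough x y) ∈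
        prodLines (PGLines F n) (PGLines F m) :=
      Or.inl ⟨X, projLineThrough x y, hline, rfl⟩
    exact key (X, x) (X, y) (X, z) _ hg ⟨rfl, (le_sup_left : x.submodule ≤ _)⟩ ⟨rfl, (le_sup_right : y.submodule ≤ _)⟩
      ⟨rfl, hz⟩ (by simp [hne]) (hx X) (hy X)
end
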